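/- arXiv:2105.04518 — 6 statements merged into one kernel-verified Lean document; each statement's English description precedes it below -/
import Mathlib

section
/- For each n, let Z^(n) be a random treatment assignment on a population of N_n units, N_n → ∞, with exposure indicators D^(n)_{i,k} ∈ {0,1} (i ≤ N_n, k ≤ K, Σ_k D^(n)_{i,k} = 1 a.s.), exposure probabilities p^(n)_i(c_k) = E[D^(n)_{i,k}] and joint exposure probabilities p^(n)_{ij}(c_k) = E[D^(n)_{i,k} D^(n)_{j,k}], and fixed potential outcomes y^(n)_i(c_k) with |y^(n)_i(c_k)| ≤ c < ∞ uniformly. Assume for every k: (Condition 1) p^(n)_i(c_k) > 0 for all i and Σ_{i=1}^{N_n} 1/p^(n)_i(c_k) = o(N_n²); (Condition 2) Σ_{i=1}^{N_n} Σ_{j≠i} | p^(n)_{ij}(c_k)/(p^(n)_i(c_k) p^(n)_j(c_k)) − 1 | = o(N_n²). Then for every pair of conditions k, l and every ε > 0, P(|τ̂_n(c_k,c_l) − τ_n(c_k,c_l)| > ε) → 0 as n → ∞, where ŷ_n(c_k) = (1/N_n) Σ_i D^(n)_{i,k} y^(n)_i(c_k)/p^(n)_i(c_k), τ̂_n(c_k,c_l)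 = ŷ_n(c_k) − ŷ_n(c_l), and τ_n(c_k,c_l) = (1/N_n) Σ_i (y^(n)_i(c_k) − y^(n)_i(c_l)). -/
/-!
The Horvitz–Thompson total `∑ᵢ Dᵢ yᵢ / pᵢ` is unbiased for `∑ᵢ yᵢ`, and its variance is the sum
of the covariances `yᵢ yⱼ (pᵢⱼ / (pᵢ pⱼ) - 1)`. Since `pᵢᵢ = pᵢ` for an indicator, the diagonal
terms `yᵢ² (1 / pᵢ - 1)` are at most `c² / pᵢ` and the off-diagonal ones at most
`c² |pᵢⱼ / (pᵢ pⱼ) - 1|`, so after dividing by `N` the variance is `o(1)` under Conditions 1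
and 2. Chebyshev's inequality gives consistency of each mean estimator, and a union bound that
of their contrast.
-/

open MeasureTheory ProbabilityTheory Filter Finset

lemma memLp_of_forall_eq_zero_or_one {Ω : Type*} [MeasurableSpace Ω] {μ : Measure Ω}
    [IsFiniteMeasure μ] {X : Ω → ℝ} (hX : Measurable X) (h01 : ∀ ω, X ω = 0 ∨ X ω = 1)
    (q : ENNReal) : MemLp X q μ :=
  MemLp.of_bound hX.aestronglyMeasurable 1 <| ae_of_all _ fun ω => by
    rcases h01 ω with h | h <;> simp [h]

lemma measure_lt_abs_sub_le_add {Ω : Type*} [MeasurableSpace Ω] (μ : Measure Ω)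
    (f g : Ω → ℝ) (a b : ℝ) :
    μ {ω | a + b < |f ω - g ω|} ≤ μ {ω | a < |f ω|} + μ {ω | b < |g ω|} := by
  refine (measure_mono fun ω (hω : a + b < |f ω - g ω|) => ?_).trans (measure_union_le _ _)
  by_contra h
  simp only [Set.mem_union, Set.mem_ofPred_eq, not_or, not_lt] at h
  linarith [abs_sub (f ω) (g ω)]

section HorvitzThompson

variable {Ω : Type*} [MeasurableSpace Ω] {μ : Measure Ω}
  {ι : Type*} [Fintype ι] {D : ι → Ω → ℝ} {y p : ι → ℝ} {pp : ι → ι → ℝ}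

lemma integral_horvitzThompson (hD : ∀ i, Integrable (D i) μ)
    (hp : ∀ i, p i = ∫ ω, D i ω ∂μ) (hp0 : ∀ i, p i ≠ 0) :
    ∫ ω, ∑ i, D i ω * y i / p i ∂μ = ∑ i, y i := by
  rw [integral_finsetSum _ fun i _ => ((hD i).mul_const _).div_const _]
  refine sum_congr rfl fun i _ => ?_
  rw [integral_div, integral_mul_const, ← hp, mul_div_cancel_left₀ _ (hp0 i)]

lemma variance_horvitzThompson [IsProbabilityMeasure μ] (hD : ∀ i, MemLp (D i) 2 μ)
    (hp : ∀ i, p i = ∫ ω, D i ω ∂μ) (hpp : ∀ i j, pp i j = ∫ ω, D i ω * D j ω ∂μ)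
    (hp0 : ∀ i, p i ≠ 0) :
    Var[fun ω => ∑ i, D i ω * y i / p i; μ] =
      ∑ i, ∑ j, y i * y j * (pp i j / (p i * p j) - 1) := by
  simp_rw [mul_div_assoc]
  rw [variance_fun_sum fun i => (hD i).mul_const _]
  refine sum_congr rfl fun i _ => sum_congr rfl fun j _ => ?_
  rw [covariance_mul_const_left, covariance_mul_const_right, covariance_eq_sub (hD i) (hD j),
    ← hp i, ← hp j]
  simp only [Pi.mul_apply, ← hpp]
  field_simp [hp0 i, hp0 j]

lemma variance_horvitzThompson_le [IsProbabilityMeasure μ] [DecidableEq ι]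
    (hDmeas : ∀ i, Measurable (D i)) (hD01 : ∀ i ω, D i ω = 0 ∨ D i ω = 1) {c : ℝ}
    (hy : ∀ i, |y i| ≤ c) (hp : ∀ i, p i = ∫ ω, D i ω ∂μ)
    (hpp : ∀ i j, pp i j = ∫ ω, D i ω * D j ω ∂μ) (hppos : ∀ i, 0 < p i) :
    Var[fun ω => ∑ i, D i ω * y i / p i; μ] ≤
      c ^ 2 * (∑ i, 1 / p i + ∑ i, ∑ j ∈ univ.erase i, |pp i j / (p i * p j) - 1|) := by
  have hdiag : ∀ i, pp i i = p i := fun i => by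
    have hsq : ∀ ω, D i ω * D i ω = D i ω := fun ω => by rcases hD01 i ω with h | h <;> simp [h]
    simp only [hpp, hp, hsq]
  rw [variance_horvitzThompson (fun i => memLp_of_forall_eq_zero_or_one (hDmeas i) (hD01 i) 2)
    hp hpp fun i => (hppos i).ne', mul_add, mul_sum, mul_sum, ← sum_add_distrib]
  gcongr with i
  rw [← add_sum_erase _ _ (mem_univ i), mul_sum]
  gcongr ?_ + ∑ j ∈ _, ?_ with j
  · calc y i * y i * (pp i i / (p i * p i) - 1) = y i ^ 2 * (1 / p i) - y i ^ 2 := by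
          rw [hdiag]; field_simp [(hppos i).ne']
      _ ≤ y i ^ 2 * (1 / p i) := sub_le_self _ (sq_nonneg _)
      _ ≤ c ^ 2 * (1 / p i) := by
          have hy2 : y i ^ 2 ≤ c ^ 2 := by
            simpa using pow_le_pow_left₀ (abs_nonneg (y i)) (hy i) 2
          exact mul_le_mul_of_nonneg_right hy2 (one_div_nonneg.mpr (hppos i).le)
  · calc y i * y j * (pp i j / (p i * p j) - 1)
        ≤ |y i| * |y j| * |pp i j / (p i * p j) - 1| := by
          rw [← abs_mul, ← abs_mul]; exact le_abs_self _
      _ ≤ c ^ 2 * |pp i j / (p i * p j) - 1| := by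
          rw [sq]; gcongr
          exacts [(abs_nonneg _).trans (hy i), hy i, hy j]

lemma measure_lt_abs_horvitzThompson_sub_le [IsProbabilityMeasure μ] [DecidableEq ι]
    (hDmeas : ∀ i, Measurable (D i)) (hD01 : ∀ i ω, D i ω = 0 ∨ D i ω = 1) {c : ℝ}
    (hy : ∀ i, |y i| ≤ c) (hp : ∀ i, p i = ∫ ω, D i ω ∂μ)
    (hpp : ∀ i j, pp i j = ∫ ω, D i ω * D j ω ∂μ) (hppos : ∀ i, 0 < p i) (M : ℕ) {ε : ℝ}
    (hε : 0 < ε) :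
    μ {ω | ε < |(M : ℝ)⁻¹ * ∑ i, D i ω * y i / p i - (M : ℝ)⁻¹ * ∑ i, y i|} ≤
      ENNReal.ofReal (c ^ 2 / ε ^ 2 *
        ((∑ i, 1 / p i + ∑ i, ∑ j ∈ univ.erase i, |pp i j / (p i * p j) - 1|) / (M : ℝ) ^ 2)) := by
  have hD i : MemLp (D i) 2 μ := memLp_of_forall_eq_zero_or_one (hDmeas i) (hD01 i) 2
  set X : Ω → ℝ := fun ω => (M : ℝ)⁻¹ * ∑ i, D i ω * y i / p i
  have hY : MemLp (fun ω => ∑ i, D i ω * y i / p i) 2 μ :=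
    memLp_finsetSum _ fun i _ => by simpa only [mul_div_assoc] using (hD i).mul_const (y i / p i)
  have hX : MemLp X 2 μ := hY.const_mul _
  have hmean : μ[X] = (M : ℝ)⁻¹ * ∑ i, y i := by
    rw [integral_const_mul, integral_horvitzThompson (fun i => (hD i).integrable one_le_two) hp
      fun i => (hppos i).ne']
  calc μ {ω | ε < |X ω - (M : ℝ)⁻¹ * ∑ i, y i|} ≤ μ {ω | ε ≤ |X ω - μ[X]|} :=
        measure_mono fun ω h => by rw [Set.mem_ofPred_eq, hmean]; exact h.le
    _ ≤ ENNReal.ofReal (Var[X; μ] / ε ^ 2) := meas_ge_le_variance_div_sq hX hε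
    _ ≤ _ := by
        refine ENNReal.ofReal_le_ofReal ?_
        rw [variance_const_mul]
        calc (M : ℝ)⁻¹ ^ 2 * Var[fun ω => ∑ i, D i ω * y i / p i; μ] / ε ^ 2
            ≤ (M : ℝ)⁻¹ ^ 2 * (c ^ 2 * (∑ i, 1 / p i +
                ∑ i, ∑ j ∈ univ.erase i, |pp i j / (p i * p j) - 1|)) / ε ^ 2 := by
              gcongr
              exact variance_horvitzThompson_le hDmeas hD01 hy hp hpp hppos
          _ = _ := by ring

end HorvitzThompson

lemma tendsto_measure_lt_abs_horvitzThompson_sub {Ω : ℕ → Type*} [∀ n, MeasurableSpace (Ω n)]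
    {μ : ∀ n, Measure (Ω n)} [∀ n, IsProbabilityMeasure (μ n)] {N : ℕ → ℕ}
    {D : ∀ n, Fin (N n) → Ω n → ℝ} (hDmeas : ∀ n i, Measurable (D n i))
    (hD01 : ∀ n i ω, D n i ω = 0 ∨ D n i ω = 1) {y : ∀ n, Fin (N n) → ℝ} {c : ℝ}
    (hy : ∀ n i, |y n i| ≤ c) {p : ∀ n, Fin (N n) → ℝ} (hp : ∀ n i, p n i = ∫ ω, D n i ω ∂μ n)
    {pp : ∀ n, Fin (N n) → Fin (N n) → ℝ}
    (hpp : ∀ n i j, pp n i j = ∫ ω, D n i ω * D n j ω ∂μ n) (hppos : ∀ n i, 0 < p n i)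
    (hcond1 : Tendsto (fun n => (∑ i, 1 / p n i) / (N n : ℝ) ^ 2) atTop (nhds 0))
    (hcond2 : Tendsto (fun n => (∑ i, ∑ j ∈ univ.erase i,
      |pp n i j / (p n i * p n j) - 1|) / (N n : ℝ) ^ 2) atTop (nhds 0))
    {ε : ℝ} (hε : 0 < ε) :
    Tendsto (fun n => μ n {ω | ε <
      |(N n : ℝ)⁻¹ * ∑ i, D n i ω * y n i / p n i - (N n : ℝ)⁻¹ * ∑ i, y n i|}) atTop (nhds 0) := by
  have hbound := ENNReal.tendsto_ofReal ((hcond1.add hcond2).const_mul (c ^ 2 / ε ^ 2))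
  simp only [← add_div, add_zero, mul_zero, ENNReal.ofReal_zero] at hbound
  exact tendsto_of_tendsto_of_tendsto_of_le_of_le tendsto_const_nhds hbound (fun _ => zero_le)
    fun n => measure_lt_abs_horvitzThompson_sub_le (hDmeas n) (hD01 n) (hy n) (hp n) (hpp n)
      (hppos n) (N n) hε

theorem horvitz_thompson_consistent_general
    (K : ℕ)
    (Ω : ℕ → Type) [∀ n, MeasurableSpace (Ω n)]
    (μ : ∀ n, Measure (Ω n)) [∀ n, IsProbabilityMeasure (μ n)]
    (N : ℕ → ℕ)
    -- exposure indicators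
    (D : ∀ n, Fin (N n) → Fin K → Ω n → ℝ)
    (hDmeas : ∀ n i k, Measurable (D n i k))
    (hD01 : ∀ n i k ω, D n i k ω = 0 ∨ D n i k ω = 1)
    -- fixed potential outcomes, uniformly bounded
    (y : ∀ n, Fin (N n) → Fin K → ℝ)
    (c : ℝ) (hy : ∀ n i k, |y n i k| ≤ c)
    -- exposure probabilities and joint exposure probabilities
    (p : ∀ n, Fin (N n) → Fin K → ℝ)
    (hp : ∀ n i k, p n i k = ∫ ω, D n i k ω ∂μ n)
    (pp : ∀ n, Fin (N n) → Fin (N n) → Fin K → ℝ)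
    (hpp : ∀ n i j k, pp n i j k = ∫ ω, D n i k ω * D n j k ω ∂μ n)
    -- Condition 1
    (hppos : ∀ n i k, 0 < p n i k)
    (hcond1 : ∀ k : Fin K,
      Tendsto (fun n => (∑ i, 1 / p n i k) / (N n : ℝ) ^ 2) atTop (nhds 0))
    -- Condition 2
    (hcond2 : ∀ k : Fin K,
      Tendsto (fun n =>
          (∑ i, ∑ j ∈ Finset.univ.erase i,
            |pp n i j k / (p n i k * p n j k) - 1|) / (N n : ℝ) ^ 2)
        atTop (nhds 0)) :
    ∀ k l : Fin K, ∀ ε : ℝ, 0 < ε →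
      Tendsto (fun n =>
          μ n {ω | ε <
            |((N n : ℝ)⁻¹ * ∑ i, D n i k ω * y n i k / p n i k
              - (N n : ℝ)⁻¹ * ∑ i, D n i l ω * y n i l / p n i l)
              - (N n : ℝ)⁻¹ * ∑ i, (y n i k - y n i l)|})
        atTop (nhds 0) := by
  intro k l ε hε
  have hdev (m : Fin K) := tendsto_measure_lt_abs_horvitzThompson_sub (fun n i => hDmeas n i m)
    (fun n i => hD01 n i m) (fun n i => hy n i m) (fun n i => hp n i m) (fun n i j => hpp n i j m)
    (fun n i => hppos n i m) (hcond1 m) (hcond2 m) (half_pos hε)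
  refine tendsto_of_tendsto_of_tendsto_of_le_of_le tendsto_const_nhds
    (by simpa using (hdev k).add (hdev l)) (fun _ => zero_le) fun n => ?_
  calc _ = μ n {ω | ε / 2 + ε / 2 <
        |((N n : ℝ)⁻¹ * ∑ i, D n i k ω * y n i k / p n i k - (N n : ℝ)⁻¹ * ∑ i, y n i k)
          - ((N n : ℝ)⁻¹ * ∑ i, D n i l ω * y n i l / p n i l - (N n : ℝ)⁻¹ * ∑ i, y n i l)|} := by
        simp only [add_halves, sum_sub_distrib, mul_sub, sub_sub_sub_comm]
    _ ≤ _ := measure_lt_abs_sub_le_add _ _ _ _ _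

/-- Consistency of the Horvitz–Thompson contrast estimator under
Conditions 1 and 2 (bounded outcomes, positive exposure probabilities with
`∑_i 1/p_i = o(N²)`, and limited pairwise clustering `∑_{i≠j}|p_ij/(p_i p_j) − 1| = o(N²)`). -/
theorem horvitz_thompson_consistent
    (K : ℕ)
    (Ω : ℕ → Type) [∀ n, MeasurableSpace (Ω n)]
    (μ : ∀ n, Measure (Ω n)) [∀ n, IsProbabilityMeasure (μ n)]
    (N : ℕ → ℕ) (hN : Tendsto N atTop atTop)
    -- exposure indicators
    (D : ∀ n, Fin (N n) → Fin K → Ω n → ℝ)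
    (hDmeas : ∀ n i k, Measurable (D n i k))
    (hD01 : ∀ n i k ω, D n i k ω = 0 ∨ D n i k ω = 1)
    (hDone : ∀ n, ∀ᵐ ω ∂μ n, ∀ i, ∑ k, D n i k ω = 1)
    -- fixed potential outcomes, uniformly bounded
    (y : ∀ n, Fin (N n) → Fin K → ℝ)
    (c : ℝ) (hy : ∀ n i k, |y n i k| ≤ c)
    -- exposure probabilities and joint exposure probabilities
    (p : ∀ n, Fin (N n) → Fin K → ℝ)
    (hp : ∀ n i k, p n i k = ∫ ω, D n i k ω ∂μ n)
    (pp : ∀ n, Fin (N n) → Fin (N n) → Fin K → ℝ)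
    (hpp : ∀ n i j k, pp n i j k = ∫ ω, D n i k ω * D n j k ω ∂μ n)
    -- Condition 1
    (hppos : ∀ n i k, 0 < p n i k)
    (hcond1 : ∀ k : Fin K,
      Tendsto (fun n => (∑ i, 1 / p n i k) / (N n : ℝ) ^ 2) atTop (nhds 0))
    -- Condition 2
    (hcond2 : ∀ k : Fin K,
      Tendsto (fun n =>
          (∑ i, ∑ j ∈ Finset.univ.erase i,
            |pp n i j k / (p n i k * p n j k) - 1|) / (N n : ℝ) ^ 2)
        atTop (nhds 0)) :
    ∀ k l : Fin K, ∀ ε : ℝ, 0 < ε →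
      Tendsto (fun n =>
          μ n {ω | ε <
            |((N n : ℝ)⁻¹ * ∑ i, D n i k ω * y n i k / p n i k
              - (N n : ℝ)⁻¹ * ∑ i, D n i l ω * y n i l / p n i l)
              - (N n : ℝ)⁻¹ * ∑ i, (y n i k - y n i l)|})
        atTop (nhds 0) :=
  horvitz_thompson_consistent_general K Ω μ N D hDmeas hD01 y c hy p hp pp hpp hppos hcond1 hcond2
end

section
/- Under the four-level exposure model with noisy network observation and i.i.d. Bernoulli(p) treatment, the confusion matrix entries of vertex i for the treated block are: P_i(c̃_{10}, c_{10}) = p (1−p)^{d_i} (1−αp)^{N−1−d_i}; P_i(c̃_{11}, c_{10}) = p (1−p)^{d_i} [1 − (1−αp)^{N−1−d_i}]; P_i(c̃_{10}, c_{11}) = p (1−αp)^{N−1−d_i} [ (1−(1−β)p)^{d_i} − (1−p)^{d_i} ]; and P_i(c̃_{11}, c_{11}) = p [ 1 − (1−p)^{d_i} − (1−αp)^{N−1−d_i} ( (1−(1−β)p)^{d_i} − (1−p)^{d_i} ) ]. -/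
open MeasureTheory ProbabilityTheory Filter

/-!
Fix the vertex `i`. The pairs `(Z j, Ã i j)`, `j : Fin N`, are functions of pairwise disjoint
blocks of the independent family `(Z, Ã)` (the treatment of `j` and the edge `{i, j}`), hence are
independent. The events "treated with no treated true neighbour", "treated with no treated
observed neighbour" and their intersection are intersections over `j` of events about the pair
`(Z j, Ã i j)`, so their probabilities are products whose factors only depend on whether `j` is a
true neighbour; this gives the powers `d_i` and `N - 1 - d_i`. The four cells of the treated block
are differences of these three probabilities.
-/

open Function

theorem Finset.prod_erase_ite_eq_pow {ι M : Type*} [Fintype ι] [DecidableEq ι] [CommMonoid M]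
    {r : ι → ℕ} (hr : ∀ j, r j = 0 ∨ r j = 1) {i : ι} (hri : r i = 0) (x y : M) :
    ∏ j ∈ univ.erase i, (if r j = 1 then x else y)
      = x ^ (∑ j, r j) * y ^ (Fintype.card ι - 1 - ∑ j, r j) := by
  have hsum : ∑ j, r j = ({j ∈ univ.erase i | r j = 1} : Finset ι).card := by
    rw [card_filter, ← sum_erase _ hri]
    exact sum_congr rfl fun j _ => by rcases hr j with h | h <;> simp [h]
  have hcard := card_filter_add_card_filter_not (s := univ.erase i) (fun j => r j = 1)
  rw [card_erase_of_mem (mem_univ i), card_univ] at hcard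
  rw [prod_ite, prod_const, prod_const, hsum]
  congr 2
  omega

section Probability

variable {Ω : Type*} {mΩ : MeasurableSpace Ω} {μ : Measure Ω}

theorem ProbabilityTheory.iIndep.iIndep_biSup_of_pairwise_disjoint {ι κ : Type*}
    {m : ι → MeasurableSpace Ω} (h_le : ∀ i, m i ≤ mΩ) (h_indep : iIndep m μ) {T : κ → Set ι}
    (hT : Pairwise (Disjoint on T)) : iIndep (fun k => ⨆ i ∈ T k, m i) μ := by
  classical
  have := h_indep.isProbabilityMeasure
  refine (iIndep_iff _ μ).2 fun s => ?_
  induction s using Finset.induction with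
  | empty => simp
  | @insert a s ha ih =>
    intro E hE
    rw [Finset.set_biInter_insert, Finset.prod_insert ha,
      ← ih fun k hk => hE k (Finset.mem_insert_of_mem hk)]
    have hdisj : Disjoint (T a) (⋃ k ∈ s, T k) :=
      Set.disjoint_iUnion₂_right.2 fun k hk => hT (ne_of_mem_of_not_mem hk ha).symm
    refine (Indep_iff _ _ _).1 (indep_iSup_of_disjoint h_le h_indep hdisj) _ _
      (hE a (Finset.mem_insert_self a s)) (Finset.measurableSet_biInter s fun k hk => ?_)
    exact biSup_mono (f := m) (fun i hi => Set.mem_biUnion hk hi) _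
      (hE k (Finset.mem_insert_of_mem hk))

variable {ι β : Type*} [MeasurableSpace β] [Fintype ι] [DecidableEq ι] {W : ι → Ω → β}

theorem ProbabilityTheory.iIndepFun.measureReal_preimage_inter_iInter (hW : iIndepFun W μ)
    (i : ι) {s : Set β} {t : ι → Set β} (hs : MeasurableSet s) (ht : ∀ j, MeasurableSet (t j)) :
    μ.real (W i ⁻¹' s ∩ ⋂ j, W j ⁻¹' t j)
      = μ.real (W i ⁻¹' (s ∩ t i)) * ∏ j ∈ Finset.univ.erase i, μ.real (W j ⁻¹' t j) := by
  have hset : W i ⁻¹' s ∩ ⋂ j, W j ⁻¹' t j = ⋂ j, W j ⁻¹' update t i (s ∩ t i) j := by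
    ext ω
    simp only [Set.mem_inter_iff, Set.mem_iInter, Set.mem_preimage, update_apply]
    grind
  have hmeas : ∀ j, MeasurableSet (update t i (s ∩ t i) j) := fun j => by
    rcases eq_or_ne j i with rfl | hj
    · simpa using hs.inter (ht j)
    · simpa [hj] using ht j
  rw [hset, measureReal_def, hW.meas_iInter fun j => ⟨_, hmeas j, rfl⟩, ENNReal.toReal_prod,
    ← Finset.mul_prod_erase _ _ (Finset.mem_univ i)]
  congr 1
  · simp [measureReal_def]
  · refine Finset.prod_congr rfl fun j hj => ?_
    simp [measureReal_def, Finset.ne_of_mem_erase hj]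

theorem ProbabilityTheory.iIndepFun.measureReal_preimage_inter_iInter_eq_pow
    (hW : iIndepFun W μ) {i : ι} {s : Set β} {t : ι → Set β} (hs : MeasurableSet s)
    (ht : ∀ j, MeasurableSet (t j)) (hsti : W i ⁻¹' (s ∩ t i) = W i ⁻¹' s) {r : ι → ℕ}
    (hr : ∀ j, r j = 0 ∨ r j = 1) (hri : r i = 0) {x y : ℝ}
    (htj : ∀ j ≠ i, μ.real (W j ⁻¹' t j) = if r j = 1 then x else y) :
    μ.real (W i ⁻¹' s ∩ ⋂ j, W j ⁻¹' t j)
      = μ.real (W i ⁻¹' s) * x ^ (∑ j, r j) * y ^ (Fintype.card ι - 1 - ∑ j, r j) := by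
  rw [hW.measureReal_preimage_inter_iInter i hs ht, hsti,
    Finset.prod_congr rfl fun j hj => htj j (Finset.ne_of_mem_erase hj),
    Finset.prod_erase_ite_eq_pow hr hri, mul_assoc]

variable [IsProbabilityMeasure μ]

theorem probReal_eq_zero_eq_one_sub {X : Ω → ℕ} (hX : Measurable X)
    (hX01 : ∀ ω, X ω = 0 ∨ X ω = 1) :
    μ.real {ω | X ω = 0} = 1 - μ.real {ω | X ω = 1} := by
  have hset : {ω | X ω = 0} = {ω | X ω = 1}ᶜ := by
    ext ω; rcases hX01 ω with h | h <;> simp [h]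
  rw [hset]
  exact probReal_compl_eq_one_sub (hX (measurableSet_singleton 1))

theorem ProbabilityTheory.IndepFun.measureReal_mul_eq_zero {X Y : Ω → ℕ} (hXY : IndepFun X Y μ)
    (hX : Measurable X) (hY : Measurable Y) (hX01 : ∀ ω, X ω = 0 ∨ X ω = 1)
    (hY01 : ∀ ω, Y ω = 0 ∨ Y ω = 1) :
    μ.real {ω | X ω * Y ω = 0} = 1 - μ.real {ω | X ω = 1} * μ.real {ω | Y ω = 1} := by
  have hset : {ω | X ω * Y ω = 0} = (X ⁻¹' {1} ∩ Y ⁻¹' {1})ᶜ := by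
    ext ω; rcases hX01 ω with h | h <;> rcases hY01 ω with h' | h' <;> simp [h, h']
  rw [hset, probReal_compl_eq_one_sub ((hX (measurableSet_singleton 1)).inter
    (hY (measurableSet_singleton 1))), measureReal_def, measureReal_def, measureReal_def,
    hXY.measure_inter_preimage_eq_mul _ _ (measurableSet_singleton 1) (measurableSet_singleton 1),
    ENNReal.toReal_mul]
  rfl

theorem measureReal_confusion_cells {X f g : Ω → ℕ} (hX : Measurable X) (hf : Measurable f)
    (hg : Measurable g) :
    μ.real {ω | (X ω = 1 ∧ 0 < f ω) ∧ (X ω = 1 ∧ g ω = 0)}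
        = μ.real {ω | X ω = 1 ∧ g ω = 0}
          - μ.real {ω | (X ω = 1 ∧ f ω = 0) ∧ (X ω = 1 ∧ g ω = 0)} ∧
      μ.real {ω | (X ω = 1 ∧ f ω = 0) ∧ (X ω = 1 ∧ 0 < g ω)}
        = μ.real {ω | X ω = 1 ∧ f ω = 0}
          - μ.real {ω | (X ω = 1 ∧ f ω = 0) ∧ (X ω = 1 ∧ g ω = 0)} ∧
      μ.real {ω | (X ω = 1 ∧ 0 < f ω) ∧ (X ω = 1 ∧ 0 < g ω)}
        = μ.real {ω | X ω = 1} - μ.real {ω | X ω = 1 ∧ f ω = 0}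
          - μ.real {ω | X ω = 1 ∧ g ω = 0}
          + μ.real {ω | (X ω = 1 ∧ f ω = 0) ∧ (X ω = 1 ∧ g ω = 0)} := by
  set O := {ω | X ω = 1 ∧ f ω = 0}
  set T := {ω | X ω = 1 ∧ g ω = 0}
  have hO : MeasurableSet O :=
    (hX (measurableSet_singleton 1)).inter (hf (measurableSet_singleton 0))
  have hT : MeasurableSet T :=
    (hX (measurableSet_singleton 1)).inter (hg (measurableSet_singleton 0))
  have hTO := measureReal_inter_add_sdiff (μ := μ) (s := T) hO
  have hOT := measureReal_inter_add_sdiff (μ := μ) (s := O) hT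
  have hunion := measureReal_union_add_inter (μ := μ) (s := O) hT
  have hsub : O ∪ T ⊆ {ω | X ω = 1} := Set.union_subset (fun _ h => h.1) (fun _ h => h.1)
  rw [Set.inter_comm] at hTO
  rw [show {ω | (X ω = 1 ∧ f ω = 0) ∧ (X ω = 1 ∧ g ω = 0)} = O ∩ T from rfl]
  refine ⟨?_, ?_, ?_⟩
  · calc μ.real _ = μ.real (T \ O) := by
          congr 1; ext ω
          simp only [O, T, Set.mem_sdiff, Set.mem_ofPred_eq, Nat.pos_iff_ne_zero]
          tauto
      _ = _ := by linarith
  · calc μ.real _ = μ.real (O \ T) := by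
          congr 1; ext ω
          simp only [O, T, Set.mem_sdiff, Set.mem_ofPred_eq, Nat.pos_iff_ne_zero]
          tauto
      _ = _ := by linarith
  · calc μ.real _ = μ.real ({ω | X ω = 1} \ (O ∪ T)) := by
          congr 1; ext ω
          simp only [O, T, Set.mem_sdiff, Set.mem_union, Set.mem_ofPred_eq, Nat.pos_iff_ne_zero]
          tauto
      _ = _ := by
        rw [measureReal_sdiff hsub (hO.union hT)]
        linarith

end Probability

section EgoEvents

variable {Ω ι : Type*} {mΩ : MeasurableSpace Ω} {μ : Measure Ω} [Fintype ι] [DecidableEq ι]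
  {Z Y : ι → Ω → ℕ} {r : ι → ℕ} {i : ι}

theorem measureReal_treated_no_treated_neighbour (hZ : iIndepFun Z μ)
    (hr : ∀ j, r j = 0 ∨ r j = 1) (hri : r i = 0) {x : ℝ}
    (hx : ∀ j ≠ i, r j = 1 → μ.real {ω | Z j ω = 0} = x) :
    μ.real {ω | Z i ω = 1 ∧ ∑ j, Z j ω * r j = 0} = μ.real {ω | Z i ω = 1} * x ^ (∑ j, r j) := by
  have hset : {ω | Z i ω = 1 ∧ ∑ j, Z j ω * r j = 0}
      = Z i ⁻¹' {1} ∩ ⋂ j, Z j ⁻¹' {z | z * r j = 0} := by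
    ext ω; simp [Finset.sum_eq_zero_iff]
  rw [hset, hZ.measureReal_preimage_inter_iInter_eq_pow (x := x) (y := 1) .of_discrete
    (fun _ => .of_discrete) (by simp [hri]) hr hri]
  · rw [one_pow, mul_one]; rfl
  · intro j hj
    rcases hr j with h | h
    · simp [h, hZ.isProbabilityMeasure]
    · rw [if_pos h, ← hx j hj h]
      congr 1; ext; simp [h]

theorem measureReal_treated_no_observed_treated_neighbour
    (hW : iIndepFun (fun j ω => (Z j ω, Y j ω)) μ) (hYi : ∀ ω, Y i ω = 0)
    (hr : ∀ j, r j = 0 ∨ r j = 1) (hri : r i = 0) {x y : ℝ}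
    (hxy : ∀ j ≠ i, μ.real {ω | Z j ω * Y j ω = 0} = if r j = 1 then x else y) :
    μ.real {ω | Z i ω = 1 ∧ ∑ j, Z j ω * Y j ω = 0}
      = μ.real {ω | Z i ω = 1} * x ^ (∑ j, r j) * y ^ (Fintype.card ι - 1 - ∑ j, r j) := by
  have hset : {ω | Z i ω = 1 ∧ ∑ j, Z j ω * Y j ω = 0}
      = (fun ω => (Z i ω, Y i ω)) ⁻¹' {z | z.1 = 1}
        ∩ ⋂ j, (fun ω => (Z j ω, Y j ω)) ⁻¹' {z | z.1 * z.2 = 0} := by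
    ext ω; simp [Finset.sum_eq_zero_iff]
  rw [hset, hW.measureReal_preimage_inter_iInter_eq_pow (t := fun _ => {z | z.1 * z.2 = 0})
    .of_discrete (fun _ => .of_discrete) (by simp [hYi]) hr hri hxy]
  rfl

theorem measureReal_treated_no_treated_neighbour_inter
    (hW : iIndepFun (fun j ω => (Z j ω, Y j ω)) μ) (hYi : ∀ ω, Y i ω = 0)
    (hr : ∀ j, r j = 0 ∨ r j = 1) (hri : r i = 0) {x y : ℝ}
    (hx : ∀ j ≠ i, r j = 1 → μ.real {ω | Z j ω = 0} = x)
    (hy : ∀ j ≠ i, r j = 0 → μ.real {ω | Z j ω * Y j ω = 0} = y) :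
    μ.real {ω | (Z i ω = 1 ∧ ∑ j, Z j ω * Y j ω = 0) ∧ (Z i ω = 1 ∧ ∑ j, Z j ω * r j = 0)}
      = μ.real {ω | Z i ω = 1} * x ^ (∑ j, r j) * y ^ (Fintype.card ι - 1 - ∑ j, r j) := by
  have hset : {ω | (Z i ω = 1 ∧ ∑ j, Z j ω * Y j ω = 0) ∧ (Z i ω = 1 ∧ ∑ j, Z j ω * r j = 0)}
      = (fun ω => (Z i ω, Y i ω)) ⁻¹' {z | z.1 = 1}
        ∩ ⋂ j, (fun ω => (Z j ω, Y j ω)) ⁻¹' {z | z.1 * z.2 = 0 ∧ z.1 * r j = 0} := by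
    ext ω; simp [Finset.sum_eq_zero_iff, forall_and]; tauto
  rw [hset, hW.measureReal_preimage_inter_iInter_eq_pow .of_discrete (fun _ => .of_discrete)
    (by simp [hYi, hri]) hr hri]
  · rfl
  · intro j hj
    rcases hr j with h | h
    · rw [if_neg (by omega), ← hy j hj h]
      congr 1; ext; simp [h]
    · rw [if_pos h, ← hx j hj h]
      congr 1; ext; simp +contextual [h]

end EgoEvents

section NoisyNetwork

variable {V Ω γ : Type*} [LinearOrder V] {mΩ : MeasurableSpace Ω} {μ : Measure Ω}

/-- The coordinates of `Sum.elim Z Ã` on which the pair `(Z j, Ã i j)` depends. -/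
def linkBlock (i j : V) : Set (V ⊕ {e : V × V // e.1 < e.2}) :=
  {x | Sum.elim (· = j) (fun e => e.1 = (i, j) ∨ e.1 = (j, i)) x}

theorem pairwise_disjoint_linkBlock (i : V) : Pairwise (Disjoint on linkBlock i) := by
  intro j k hjk
  rw [onFun, Set.disjoint_left]
  rintro (l | ⟨⟨u, v⟩, huv⟩) hj hk
  · exact hjk (hj.symm.trans hk)
  · simp only [linkBlock, Set.mem_ofPred_eq, Sum.elim_inr, Prod.mk.injEq] at hj hk huv
    rcases hj with ⟨rfl, rfl⟩ | ⟨rfl, rfl⟩ <;> rcases hk with ⟨h1, h2⟩ | ⟨h1, h2⟩ <;>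
      subst_vars <;> simp_all

theorem exists_edge_of_ne {Atil : V → V → Ω → γ} (hsymm : ∀ i j ω, Atil i j ω = Atil j i ω)
    {i j : V} (hij : i ≠ j) :
    ∃ e : {e : V × V // e.1 < e.2},
      (e.1 = (i, j) ∨ e.1 = (j, i)) ∧ Atil e.1.1 e.1.2 = Atil i j := by
  rcases hij.lt_or_gt with h | h
  · exact ⟨⟨(i, j), h⟩, Or.inl rfl, rfl⟩
  · exact ⟨⟨(j, i), h⟩, Or.inr rfl, funext (hsymm j i)⟩

theorem measureReal_link_eq_one {A : V → V → ℕ} (hAsymm : ∀ j k, A j k = A k j)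
    (hA01 : ∀ j k, A j k = 0 ∨ A j k = 1) {Atil : V → V → Ω → ℕ}
    (hsymm : ∀ j k ω, Atil j k ω = Atil k j ω) {α β : ℝ} (hα0 : 0 ≤ α) (hβ1 : β ≤ 1)
    (hfalse : ∀ j k, j < k → A j k = 0 → μ {ω | Atil j k ω = 1} = ENNReal.ofReal α)
    (htrue : ∀ j k, j < k → A j k = 1 → μ {ω | Atil j k ω = 1} = ENNReal.ofReal (1 - β))
    {i j : V} (hij : i ≠ j) :
    μ.real {ω | Atil i j ω = 1} = if A i j = 1 then 1 - β else α := by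
  wlog hlt : i < j generalizing i j
  · rw [show {ω | Atil i j ω = 1} = {ω | Atil j i ω = 1} by simp only [hsymm i j], hAsymm i j]
    exact this hij.symm (hij.symm.lt_of_le (not_lt.1 hlt))
  rcases hA01 i j with h0 | h1
  · rw [if_neg (by omega), measureReal_def, hfalse i j hlt h0, ENNReal.toReal_ofReal hα0]
  · rw [if_pos h1, measureReal_def, htrue i j hlt h1, ENNReal.toReal_ofReal (by linarith)]

variable [MeasurableSpace γ] {Z : V → Ω → γ} {Atil : V → V → Ω → γ}

theorem iIndepFun_treatment_prod_link (hZ : ∀ j, Measurable (Z j))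
    (hAtil : ∀ j k, Measurable (Atil j k)) (hsymm : ∀ j k ω, Atil j k ω = Atil k j ω)
    {c : γ} (hdiag : ∀ j ω, Atil j j ω = c)
    (hindep : iIndepFun (Sum.elim Z fun e : {e : V × V // e.1 < e.2} => Atil e.1.1 e.1.2) μ)
    (i : V) : iIndepFun (fun j ω => (Z j ω, Atil i j ω)) μ := by
  set F := Sum.elim Z fun e : {e : V × V // e.1 < e.2} => Atil e.1.1 e.1.2
  set m := fun x => MeasurableSpace.comap (F x) ‹MeasurableSpace γ›
  have hF : ∀ x, Measurable (F x) := by rintro (j | e); exacts [hZ j, hAtil _ _]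
  have hblocks := hindep.iIndep.iIndep_biSup_of_pairwise_disjoint (fun x => (hF x).comap_le)
    (pairwise_disjoint_linkBlock i)
  refine (iIndepFun_iff_iIndep _ _ _).2 (iIndep_of_iIndep_of_le hblocks fun j => ?_)
  have hcoord : ∀ x ∈ linkBlock i j, Measurable[⨆ y ∈ linkBlock i j, m y] (F x) :=
    fun x hx => (comap_measurable (F x)).mono (le_iSup₂ (f := fun y _ => m y) x hx) le_rfl
  refine Measurable.comap_le (Measurable.prodMk (hcoord (.inl j) rfl) ?_)
  rcases eq_or_ne i j with rfl | hij
  · rw [show Atil i i = fun _ => c from funext (hdiag i)]; exact measurable_const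
  · obtain ⟨e, he, hAe⟩ := exists_edge_of_ne hsymm hij
    rw [← hAe]; exact hcoord (.inr e) he

theorem indepFun_treatment_link (hsymm : ∀ j k ω, Atil j k ω = Atil k j ω)
    (hindep : iIndepFun (Sum.elim Z fun e : {e : V × V // e.1 < e.2} => Atil e.1.1 e.1.2) μ)
    {i j : V} (hij : i ≠ j) : IndepFun (Z j) (Atil i j) μ := by
  obtain ⟨e, -, hAe⟩ := exists_edge_of_ne hsymm hij
  rw [← hAe]
  exact hindep.indepFun (i := .inl j) (j := .inr e) Sum.inl_ne_inr

end NoisyNetwork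

theorem confusion_matrix_treated_block_general
    {Ω : Type} [MeasurableSpace Ω] (μ : Measure Ω) [IsProbabilityMeasure μ]
    (N : ℕ)
    (A : Fin N → Fin N → ℕ)
    (hAsymm : ∀ i j, A i j = A j i)
    (hAdiag : ∀ i, A i i = 0)
    (hA01 : ∀ i j, A i j = 0 ∨ A i j = 1)
    (α β p : ℝ) (hα0 : 0 ≤ α) (hβ1 : β ≤ 1)
    (hp0 : 0 ≤ p)
    (Z : Fin N → Ω → ℕ)
    (hZmeas : ∀ i, Measurable (Z i))
    (hZ01 : ∀ i ω, Z i ω = 0 ∨ Z i ω = 1)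
    (hZp : ∀ i, μ {ω | Z i ω = 1} = ENNReal.ofReal p)
    (Atil : Fin N → Fin N → Ω → ℕ)
    (hmeas : ∀ i j, Measurable (Atil i j))
    (hsymm : ∀ i j ω, Atil i j ω = Atil j i ω)
    (hdiag : ∀ i ω, Atil i i ω = 0)
    (h01 : ∀ i j ω, Atil i j ω = 0 ∨ Atil i j ω = 1)
    (hfalse : ∀ i j : Fin N, i < j → A i j = 0 →
      μ {ω | Atil i j ω = 1} = ENNReal.ofReal α)
    (htrue : ∀ i j : Fin N, i < j → A i j = 1 →
      μ {ω | Atil i j ω = 1} = ENNReal.ofReal (1 - β))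
    (hindep : iIndepFun
      (Sum.elim Z (fun e : {e : Fin N × Fin N // e.1 < e.2} => Atil e.1.1 e.1.2)) μ) :
    ∀ i : Fin N,
      -- P_i(c̃_10, c_10)
      μ {ω | (Z i ω = 1 ∧ (∑ j, Z j ω * Atil i j ω) = 0)
            ∧ (Z i ω = 1 ∧ (∑ j, Z j ω * A i j) = 0)}
        = ENNReal.ofReal (p * (1 - p) ^ (∑ j, A i j)
            * (1 - α * p) ^ (N - 1 - (∑ j, A i j))) ∧
      -- P_i(c̃_11, c_10)
      μ {ω | (Z i ω = 1 ∧ 0 < ∑ j, Z j ω * Atil i j ω)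
            ∧ (Z i ω = 1 ∧ (∑ j, Z j ω * A i j) = 0)}
        = ENNReal.ofReal (p * (1 - p) ^ (∑ j, A i j)
            * (1 - (1 - α * p) ^ (N - 1 - (∑ j, A i j)))) ∧
      -- P_i(c̃_10, c_11)
      μ {ω | (Z i ω = 1 ∧ (∑ j, Z j ω * Atil i j ω) = 0)
            ∧ (Z i ω = 1 ∧ 0 < ∑ j, Z j ω * A i j)}
        = ENNReal.ofReal (p * (1 - α * p) ^ (N - 1 - (∑ j, A i j))
            * ((1 - (1 - β) * p) ^ (∑ j, A i j) - (1 - p) ^ (∑ j, A i j))) ∧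
      -- P_i(c̃_11, c_11)
      μ {ω | (Z i ω = 1 ∧ 0 < ∑ j, Z j ω * Atil i j ω)
            ∧ (Z i ω = 1 ∧ 0 < ∑ j, Z j ω * A i j)}
        = ENNReal.ofReal (p * (1 - (1 - p) ^ (∑ j, A i j)
            - (1 - α * p) ^ (N - 1 - (∑ j, A i j))
              * ((1 - (1 - β) * p) ^ (∑ j, A i j) - (1 - p) ^ (∑ j, A i j)))) := by
  intro i
  have hW := iIndepFun_treatment_prod_link hZmeas hmeas hsymm hdiag hindep i
  have hZ1 : ∀ j, μ.real {ω | Z j ω = 1} = p := fun j => by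
    rw [measureReal_def, hZp, ENNReal.toReal_ofReal hp0]
  have hZ0 : ∀ j, μ.real {ω | Z j ω = 0} = 1 - p := fun j => by
    rw [probReal_eq_zero_eq_one_sub (hZmeas j) (hZ01 j), hZ1]
  have hZA : ∀ j ≠ i, μ.real {ω | Z j ω * Atil i j ω = 0}
      = if A i j = 1 then 1 - (1 - β) * p else 1 - α * p := fun j hj => by
    rw [(indepFun_treatment_link hsymm hindep hj.symm).measureReal_mul_eq_zero (hZmeas j)
      (hmeas i j) (hZ01 j) (h01 i j), hZ1,
      measureReal_link_eq_one hAsymm hA01 hsymm hα0 hβ1 hfalse htrue hj.symm]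
    split_ifs <;> ring
  have hTrue := measureReal_treated_no_treated_neighbour (Z := Z)
    (hW.comp (fun _ => Prod.fst) fun _ => measurable_fst) (hA01 i) (hAdiag i) fun j _ _ => hZ0 j
  have hObs :=
    measureReal_treated_no_observed_treated_neighbour hW (hdiag i) (hA01 i) (hAdiag i) hZA
  have hBoth := measureReal_treated_no_treated_neighbour_inter hW (hdiag i) (hA01 i) (hAdiag i)
    (fun j _ _ => hZ0 j) fun j hj h => by simpa [h] using hZA j hj
  rw [hZ1] at hTrue
  rw [hZ1, Fintype.card_fin] at hObs hBoth
  obtain ⟨h11_10, h10_11, h11_11⟩ := measureReal_confusion_cells (μ := μ) (hZmeas i)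
    (f := fun ω => ∑ j, Z j ω * Atil i j ω) (g := fun ω => ∑ j, Z j ω * A i j)
    (by fun_prop) (by fun_prop)
  refine ⟨?_, ?_, ?_, ?_⟩ <;>
    refine (ofReal_measureReal (measure_ne_top _ _)).symm.trans (congrArg ENNReal.ofReal ?_)
  · exact hBoth
  · rw [h11_10, hTrue, hBoth]; ring
  · rw [h10_11, hObs, hBoth]; ring
  · rw [h11_11, hZ1, hTrue, hObs, hBoth]; ring

/-- Confusion matrix entries of vertex `i` for the treated block under the
four-level exposure model with noisy network observation and i.i.d. Bernoulli(p)
treatment. Here the observed exposure uses the noisy network `Ã` and the true exposure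
uses `A`; `P_i(c̃_k, c_l)` is the probability of observed exposure `c_k` and true
exposure `c_l`. -/
theorem confusion_matrix_treated_block
    {Ω : Type} [MeasurableSpace Ω] (μ : Measure Ω) [IsProbabilityMeasure μ]
    (N : ℕ)
    (A : Fin N → Fin N → ℕ)
    (hAsymm : ∀ i j, A i j = A j i)
    (hAdiag : ∀ i, A i i = 0)
    (hA01 : ∀ i j, A i j = 0 ∨ A i j = 1)
    (α β p : ℝ) (hα0 : 0 ≤ α) (hα1 : α ≤ 1) (hβ0 : 0 ≤ β) (hβ1 : β ≤ 1)
    (hp0 : 0 ≤ p) (hp1 : p ≤ 1)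
    (Z : Fin N → Ω → ℕ)
    (hZmeas : ∀ i, Measurable (Z i))
    (hZ01 : ∀ i ω, Z i ω = 0 ∨ Z i ω = 1)
    (hZp : ∀ i, μ {ω | Z i ω = 1} = ENNReal.ofReal p)
    (Atil : Fin N → Fin N → Ω → ℕ)
    (hmeas : ∀ i j, Measurable (Atil i j))
    (hsymm : ∀ i j ω, Atil i j ω = Atil j i ω)
    (hdiag : ∀ i ω, Atil i i ω = 0)
    (h01 : ∀ i j ω, Atil i j ω = 0 ∨ Atil i j ω = 1)
    (hfalse : ∀ i j : Fin N, i < j → A i j = 0 →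
      μ {ω | Atil i j ω = 1} = ENNReal.ofReal α)
    (htrue : ∀ i j : Fin N, i < j → A i j = 1 →
      μ {ω | Atil i j ω = 1} = ENNReal.ofReal (1 - β))
    (hindep : iIndepFun
      (Sum.elim Z (fun e : {e : Fin N × Fin N // e.1 < e.2} => Atil e.1.1 e.1.2)) μ) :
    ∀ i : Fin N,
      -- P_i(c̃_10, c_10)
      μ {ω | (Z i ω = 1 ∧ (∑ j, Z j ω * Atil i j ω) = 0)
            ∧ (Z i ω = 1 ∧ (∑ j, Z j ω * A i j) = 0)}
        = ENNReal.ofReal (p * (1 - p) ^ (∑ j, A i j)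
            * (1 - α * p) ^ (N - 1 - (∑ j, A i j))) ∧
      -- P_i(c̃_11, c_10)
      μ {ω | (Z i ω = 1 ∧ 0 < ∑ j, Z j ω * Atil i j ω)
            ∧ (Z i ω = 1 ∧ (∑ j, Z j ω * A i j) = 0)}
        = ENNReal.ofReal (p * (1 - p) ^ (∑ j, A i j)
            * (1 - (1 - α * p) ^ (N - 1 - (∑ j, A i j)))) ∧
      -- P_i(c̃_10, c_11)
      μ {ω | (Z i ω = 1 ∧ (∑ j, Z j ω * Atil i j ω) = 0)
            ∧ (Z i ω = 1 ∧ 0 < ∑ j, Z j ω * A i j)}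
        = ENNReal.ofReal (p * (1 - α * p) ^ (N - 1 - (∑ j, A i j))
            * ((1 - (1 - β) * p) ^ (∑ j, A i j) - (1 - p) ^ (∑ j, A i j))) ∧
      -- P_i(c̃_11, c_11)
      μ {ω | (Z i ω = 1 ∧ 0 < ∑ j, Z j ω * Atil i j ω)
            ∧ (Z i ω = 1 ∧ 0 < ∑ j, Z j ω * A i j)}
        = ENNReal.ofReal (p * (1 - (1 - p) ^ (∑ j, A i j)
            - (1 - α * p) ^ (N - 1 - (∑ j, A i j))
              * ((1 - (1 - β) * p) ^ (∑ j, A i j) - (1 - p) ^ (∑ j, A i j)))) :=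
  confusion_matrix_treated_block_general μ N A hAsymm hAdiag hA01 α β p hα0 hβ1 hp0 Z hZmeas hZ01
    hZp Atil hmeas hsymm hdiag h01 hfalse htrue hindep
end

section
/- Under the four-level exposure model with noisy network observation and i.i.d. Bernoulli(p) treatment, the confusion matrix entries of vertex i for the untreated block are: P_i(c̃_{00}, c_{00}) = (1−p) (1−p)^{d_i} (1−αp)^{N−1−d_i}; P_i(c̃_{01}, c_{00}) = (1−p) (1−p)^{d_i} [1 − (1−αp)^{N−1−d_i}]; P_i(c̃_{00}, c_{01}) = (1−p) (1−αp)^{N−1−d_i} [ (1−(1−β)p)^{d_i} − (1−p)^{d_i} ]; and P_i(c̃_{01}, c_{01}) = (1−p) [ 1 − (1−p)^{d_i} − (1−αp)^{N−1−d_i} ( (1−(1−β)p)^{d_i} − (1−p)^{d_i} ) ]. Moreover, all entries mixing a treated observed exposure with an untreated true exposure (or vice versa) vanish: P_i(c̃_{11}, c_{01}) = P_i(c̃_{11}, c_{00}) = P_i(c̃_{10}, c_{01}) = P_i(c̃_{10}, c_{00}) = P_i(c̃_{01}, c_{11}) = P_i(c̃_{01}, c_{10}) = P_i(c̃_{00},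 c_{11}) = P_i(c̃_{00}, c_{10}) = 0. -/
/-!
Fix a vertex `i`. On the event `Z i = 0`, vertex `j` leaves `i` truly unexposed iff
`Z j * A i j = 0` and observed-unexposed iff `Z j * Atil i j = 0`, so the events "untreated and
truly unexposed", "untreated and observed-unexposed" and their intersection are intersections of
events about the pairs `(Z j, Atil i j)`. These pairs are independent across `j`, being read off
pairwise disjoint blocks of the independent family, so each event has probability `1 - p` times a
product of per-vertex factors `1 - p`, `1 - (1 - β) p`, `1 - α p` or `1` that depend only on
whether `j` is a neighbour of `i`. The four untreated entries follow by inclusion–exclusion; the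
mixed entries are probabilities of empty events.
-/

open MeasureTheory ProbabilityTheory Finset Function

namespace ProbabilityTheory

theorem iIndep.iSup_of_pairwise_disjoint {Ω ι J : Type*} {_mΩ : MeasurableSpace Ω}
    {μ : Measure Ω} {m : ι → MeasurableSpace Ω} (h_le : ∀ k, m k ≤ _mΩ) (h : iIndep m μ)
    {S : J → Finset ι} (hS : Pairwise (Disjoint on S)) :
    iIndep (fun j => ⨆ k ∈ S j, m k) μ := by
  classical
  refine (iIndep_iff _ μ).2 fun t E hE => ?_
  induction t using Finset.induction_on with
  | empty => simp [h.isProbabilityMeasure]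
  | insert j t hj ih =>
    rw [set_biInter_insert, prod_insert hj, ← ih fun j' hj' => hE j' (mem_insert_of_mem hj')]
    have hdisj : Disjoint (S j : Set ι) (t.biUnion S : Set ι) := by
      rw [disjoint_coe, disjoint_biUnion_right]
      exact fun j' hj' => hS fun hjj' => hj (hjj' ▸ hj')
    refine (Indep_iff _ _ μ).1 (indep_iSup_of_disjoint h_le h hdisj) _ _
      (hE j (mem_insert_self j t)) (measurableSet_biInter t fun j' hj' => ?_)
    have hle : ⨆ k ∈ S j', m k ≤ ⨆ k ∈ (t.biUnion S : Set ι), m k :=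
      biSup_mono fun k hk => mem_coe.2 (mem_biUnion.2 ⟨j', hj', hk⟩)
    exact hle _ (hE j' (mem_insert_of_mem hj'))

theorem iIndepFun.measureReal_and_forall_eq_mul_prod {Ω ι β : Type*} [MeasurableSpace Ω]
    {μ : Measure Ω} [Fintype ι] [DecidableEq ι] [MeasurableSpace β] [DiscreteMeasurableSpace β]
    {Y : ι → Ω → β} (hY : iIndepFun Y μ) (i : ι) {R : β → Prop} {P : ι → β → Prop}
    (hRP : ∀ b, R b → P i b) :
    μ.real {ω | R (Y i ω) ∧ ∀ j, P j (Y j ω)}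
      = μ.real {ω | R (Y i ω)} * ∏ j ∈ univ.erase i, μ.real {ω | P j (Y j ω)} := by
  have hset : {ω | R (Y i ω) ∧ ∀ j, P j (Y j ω)}
      = ⋂ j ∈ univ, Y j ⁻¹' (if j = i then {b | R b} else {b | P j b}) := by
    ext ω
    simp only [Set.mem_ofPred_eq, Set.mem_iInter, mem_univ, forall_const, Set.mem_preimage]
    refine ⟨fun ⟨hR, hP⟩ j => ?_, fun h => ⟨by simpa using h i, fun j => ?_⟩⟩
    · split_ifs with hj
      · exact hj ▸ hR
      · exact hP j
    · by_cases hj : j = i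
      · subst hj
        exact hRP _ (by simpa using h j)
      · simpa [hj] using h j
  rw [hset, measureReal_def, hY.measure_inter_preimage_eq_mul _ fun _ _ => .of_discrete,
    ENNReal.toReal_prod, ← mul_prod_erase univ _ (mem_univ i), if_pos rfl]
  congr 1
  exact prod_congr rfl fun j hj => by rw [if_neg (ne_of_mem_erase hj)]; rfl

theorem IndepFun.measureReal_mul_eq_zero_s10 {Ω : Type*} [MeasurableSpace Ω] {μ : Measure Ω}
    [IsProbabilityMeasure μ] {X Y : Ω → ℕ} (hX : Measurable X) (hY : Measurable Y)
    (hX01 : ∀ ω, X ω = 0 ∨ X ω = 1) (hY01 : ∀ ω, Y ω = 0 ∨ Y ω = 1) (hXY : IndepFun X Y μ) :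
    μ.real {ω | X ω * Y ω = 0} = 1 - μ.real {ω | X ω = 1} * μ.real {ω | Y ω = 1} := by
  have hset : {ω | X ω * Y ω = 0} = (X ⁻¹' {1} ∩ Y ⁻¹' {1})ᶜ := by
    ext ω; rcases hX01 ω with h | h <;> rcases hY01 ω with h' | h' <;> simp [h, h']
  rw [hset, probReal_compl_eq_one_sub ((hX (measurableSet_singleton 1)).inter
    (hY (measurableSet_singleton 1))), measureReal_def,
    hXY.measure_inter_preimage_eq_mul _ _ (measurableSet_singleton 1) (measurableSet_singleton 1),
    ENNReal.toReal_mul]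
  rfl

end ProbabilityTheory

theorem prod_erase_ite_eq_pow_sum {N : ℕ} {R : Type*} [CommMonoid R] {a : Fin N → ℕ}
    (ha : ∀ j, a j = 0 ∨ a j = 1) {i : Fin N} (hai : a i = 0) (x y : R) :
    ∏ j ∈ univ.erase i, (if a j = 1 then x else y) = x ^ (∑ j, a j) * y ^ (N - 1 - ∑ j, a j) := by
  have hdeg : #{j ∈ univ.erase i | a j = 1} = ∑ j, a j := by
    rw [filter_erase, erase_eq_of_notMem (by simp [hai]), card_filter]
    exact sum_congr rfl fun j _ => by rcases ha j with h | h <;> simp [h]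
  have hcompl := card_filter_add_card_filter_not (s := univ.erase i) (fun j => a j = 1)
  rw [card_erase_of_mem (mem_univ i), card_univ, Fintype.card_fin] at hcompl
  rw [prod_ite, prod_const, prod_const, hdeg,
    show #{j ∈ univ.erase i | ¬a j = 1} = N - 1 - ∑ j, a j by omega]

section Cells

variable {Ω : Type*} [MeasurableSpace Ω] {μ : Measure Ω} [IsFiniteMeasure μ] {u : Ω → Prop}
  {X Y : Ω → ℕ}

theorem measureReal_pos_and_eq_zero (hu : MeasurableSet {ω | u ω}) (hX : Measurable X) :
    μ.real {ω | (u ω ∧ 0 < X ω) ∧ (u ω ∧ Y ω = 0)}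
      = μ.real {ω | u ω ∧ Y ω = 0} - μ.real {ω | (u ω ∧ X ω = 0) ∧ (u ω ∧ Y ω = 0)} := by
  have hXm : MeasurableSet {ω | u ω ∧ X ω = 0} := hu.inter (hX (measurableSet_singleton 0))
  have hset : {ω | (u ω ∧ 0 < X ω) ∧ (u ω ∧ Y ω = 0)}
      = {ω | u ω ∧ Y ω = 0} \ {ω | u ω ∧ X ω = 0} := by
    ext ω
    simp only [Set.mem_ofPred_eq, Set.mem_sdiff, pos_iff_ne_zero]
    tauto
  have h := measureReal_sdiff_add_inter (μ := μ) (s := {ω | u ω ∧ Y ω = 0}) hXm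
  rw [Set.inter_comm] at h
  rw [hset]
  exact eq_sub_of_add_eq h

theorem measureReal_eq_zero_and_pos (hu : MeasurableSet {ω | u ω}) (hY : Measurable Y) :
    μ.real {ω | (u ω ∧ X ω = 0) ∧ (u ω ∧ 0 < Y ω)}
      = μ.real {ω | u ω ∧ X ω = 0} - μ.real {ω | (u ω ∧ X ω = 0) ∧ (u ω ∧ Y ω = 0)} := by
  have hYm : MeasurableSet {ω | u ω ∧ Y ω = 0} := hu.inter (hY (measurableSet_singleton 0))
  have hset : {ω | (u ω ∧ X ω = 0) ∧ (u ω ∧ 0 < Y ω)}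
      = {ω | u ω ∧ X ω = 0} \ {ω | u ω ∧ Y ω = 0} := by
    ext ω
    simp only [Set.mem_ofPred_eq, Set.mem_sdiff, pos_iff_ne_zero]
    tauto
  rw [hset]
  exact eq_sub_of_add_eq (measureReal_sdiff_add_inter hYm)

theorem measureReal_pos_and_pos (hu : MeasurableSet {ω | u ω}) (hX : Measurable X)
    (hY : Measurable Y) :
    μ.real {ω | (u ω ∧ 0 < X ω) ∧ (u ω ∧ 0 < Y ω)}
      = μ.real {ω | u ω} - μ.real {ω | u ω ∧ X ω = 0} - μ.real {ω | u ω ∧ Y ω = 0}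
        + μ.real {ω | (u ω ∧ X ω = 0) ∧ (u ω ∧ Y ω = 0)} := by
  have hXm : MeasurableSet {ω | u ω ∧ X ω = 0} := hu.inter (hX (measurableSet_singleton 0))
  have hYm : MeasurableSet {ω | u ω ∧ Y ω = 0} := hu.inter (hY (measurableSet_singleton 0))
  have hset : {ω | (u ω ∧ 0 < X ω) ∧ (u ω ∧ 0 < Y ω)}
      = {ω | u ω} \ ({ω | u ω ∧ X ω = 0} ∪ {ω | u ω ∧ Y ω = 0}) := by
    ext ω
    simp only [Set.mem_ofPred_eq, Set.mem_sdiff, Set.mem_union, pos_iff_ne_zero]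
    tauto
  rw [hset, measureReal_sdiff (s₁ := {ω | u ω})
    (Set.union_subset (fun _ h => h.1) (fun _ h => h.1)) (hXm.union hYm)]
  have h := measureReal_union_add_inter (μ := μ) (s := {ω | u ω ∧ X ω = 0}) hYm
  change _ + μ.real {ω | (u ω ∧ X ω = 0) ∧ (u ω ∧ Y ω = 0)} = _ at h
  linarith

end Cells

structure NoisyExposureModel {Ω : Type*} [MeasurableSpace Ω] (μ : Measure Ω) {N : ℕ}
    (A : Fin N → Fin N → ℕ) (α β p : ℝ) (Z : Fin N → Ω → ℕ) (Atil : Fin N → Fin N → Ω → ℕ) :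
    Prop where
  adj_symm : ∀ i j, A i j = A j i
  adj_diag : ∀ i, A i i = 0
  adj_zero_or_one : ∀ i j, A i j = 0 ∨ A i j = 1
  α_nonneg : 0 ≤ α
  β_le_one : β ≤ 1
  p_nonneg : 0 ≤ p
  measurable_treatment : ∀ i, Measurable (Z i)
  treatment_zero_or_one : ∀ i ω, Z i ω = 0 ∨ Z i ω = 1
  measure_treated : ∀ i, μ {ω | Z i ω = 1} = ENNReal.ofReal p
  measurable_obs : ∀ i j, Measurable (Atil i j)
  obs_symm : ∀ i j ω, Atil i j ω = Atil j i ω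
  obs_diag : ∀ i ω, Atil i i ω = 0
  obs_zero_or_one : ∀ i j ω, Atil i j ω = 0 ∨ Atil i j ω = 1
  measure_obs_nonedge : ∀ i j : Fin N, i < j → A i j = 0 → μ {ω | Atil i j ω = 1} = ENNReal.ofReal α
  measure_obs_edge : ∀ i j : Fin N, i < j → A i j = 1 →
    μ {ω | Atil i j ω = 1} = ENNReal.ofReal (1 - β)
  indep : iIndepFun
    (Sum.elim Z (fun e : {e : Fin N × Fin N // e.1 < e.2} => Atil e.1.1 e.1.2)) μ

/-- The coordinates of the independent family on which the pair `(Z j, Atil i j)` depends: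
the treatment of `j` and, for `j ≠ i`, the observed edge `{i, j}`. -/
def starBlock {N : ℕ} (i j : Fin N) : Finset (Fin N ⊕ {e : Fin N × Fin N // e.1 < e.2}) :=
  insert (.inl j) (({e | s(e.1.1, e.1.2) = s(i, j)} : Finset _).map Embedding.inr)

theorem pairwise_disjoint_starBlock {N : ℕ} (i : Fin N) : Pairwise (Disjoint on starBlock i) := by
  intro j j' hjj'
  rw [onFun, Finset.disjoint_left]
  rintro k hk hk'
  simp only [starBlock, mem_insert, Finset.mem_map, mem_filter, mem_univ, true_and,
    Embedding.inr_apply] at hk hk'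
  rcases hk with rfl | ⟨e, he, rfl⟩ <;> rcases hk' with hk' | ⟨e', he', hk'⟩
  · exact hjj' (Sum.inl_injective hk')
  · exact Sum.inr_ne_inl hk'
  · exact Sum.inr_ne_inl hk'
  · cases Sum.inr_injective hk'
    exact hjj' (Sym2.congr_right.1 (he.symm.trans he'))

namespace NoisyExposureModel

variable {Ω : Type*} [MeasurableSpace Ω] {μ : Measure Ω} {N : ℕ} {A : Fin N → Fin N → ℕ}
  {α β p : ℝ} {Z : Fin N → Ω → ℕ} {Atil : Fin N → Fin N → Ω → ℕ}

theorem exists_pair_obs_eq (M : NoisyExposureModel μ A α β p Z Atil) {i j : Fin N} (hij : i ≠ j) :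
    ∃ e : {e : Fin N × Fin N // e.1 < e.2},
      s(e.1.1, e.1.2) = s(i, j) ∧ Atil e.1.1 e.1.2 = Atil i j := by
  rcases hij.lt_or_gt with h | h
  · exact ⟨⟨(i, j), h⟩, rfl, rfl⟩
  · exact ⟨⟨(j, i), h⟩, Sym2.eq_swap, funext (M.obs_symm j i)⟩

theorem iIndepFun_treatment_obs (M : NoisyExposureModel μ A α β p Z Atil) (i : Fin N) :
    iIndepFun (fun j ω => (Z j ω, Atil i j ω)) μ := by
  set f := Sum.elim Z (fun e : {e : Fin N × Fin N // e.1 < e.2} => Atil e.1.1 e.1.2)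
  have hf : ∀ k, Measurable (f k) := by
    rintro (j | e)
    exacts [M.measurable_treatment j, M.measurable_obs _ _]
  have hblocks := ((iIndepFun_iff_iIndep _ _ μ).1 M.indep).iSup_of_pairwise_disjoint
    (fun k => (hf k).comap_le) (pairwise_disjoint_starBlock i)
  refine (iIndepFun_iff_iIndep _ _ μ).2
    (iIndep_of_iIndep_of_le hblocks fun j => Measurable.comap_le ?_)
  have hblock : ∀ k ∈ starBlock i j,
      Measurable[⨆ k ∈ starBlock i j, MeasurableSpace.comap (f k) inferInstance] (f k) :=
    fun k hk => (comap_measurable (f k)).mono (le_iSup₂_of_le k hk le_rfl) le_rfl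
  refine (hblock (.inl j) (mem_insert_self _ _)).prodMk ?_
  by_cases hij : i = j
  · rw [hij, show Atil j j = fun _ => 0 from funext (M.obs_diag j)]
    exact measurable_const
  · obtain ⟨e, he, hAe⟩ := M.exists_pair_obs_eq hij
    rw [← hAe]
    exact hblock (.inr e) (mem_insert_of_mem (mem_map_of_mem _ (mem_filter.2 ⟨mem_univ e, he⟩)))

theorem indepFun_treatment_obs (M : NoisyExposureModel μ A α β p Z Atil) {i j : Fin N}
    (hij : i ≠ j) : IndepFun (Z j) (Atil i j) μ := by
  obtain ⟨e, -, hAe⟩ := M.exists_pair_obs_eq hij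
  rw [← hAe]
  exact M.indep.indepFun (i := .inl j) (j := .inr e) Sum.inl_ne_inr

theorem measureReal_treated (M : NoisyExposureModel μ A α β p Z Atil) (j : Fin N) :
    μ.real {ω | Z j ω = 1} = p := by
  rw [measureReal_def, M.measure_treated j, ENNReal.toReal_ofReal M.p_nonneg]

theorem measureReal_untreated [IsProbabilityMeasure μ] (M : NoisyExposureModel μ A α β p Z Atil)
    (j : Fin N) : μ.real {ω | Z j ω = 0} = 1 - p := by
  have hcompl : {ω | Z j ω = 0} = {ω | Z j ω = 1}ᶜ := by
    ext ω
    rcases M.treatment_zero_or_one j ω with h | h <;> simp [h]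
  rw [hcompl, probReal_compl_eq_one_sub (s := {ω | Z j ω = 1})
    (M.measurable_treatment j (measurableSet_singleton 1)), M.measureReal_treated]

theorem measureReal_obs_eq_one (M : NoisyExposureModel μ A α β p Z Atil) {i j : Fin N}
    (hij : i ≠ j) : μ.real {ω | Atil i j ω = 1} = if A i j = 1 then 1 - β else α := by
  wlog h : i < j generalizing i j
  · rw [← M.adj_symm, ← this hij.symm (hij.symm.lt_of_le (not_lt.1 h))]
    simp only [M.obs_symm i j]
  rcases M.adj_zero_or_one i j with hA | hA
  · rw [measureReal_def, M.measure_obs_nonedge i j h hA, if_neg (by omega),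
      ENNReal.toReal_ofReal M.α_nonneg]
  · rw [measureReal_def, M.measure_obs_edge i j h hA, if_pos hA,
      ENNReal.toReal_ofReal (by linarith [M.β_le_one])]

theorem measureReal_mul_obs_eq_zero [IsProbabilityMeasure μ]
    (M : NoisyExposureModel μ A α β p Z Atil) {i j : Fin N} (hij : i ≠ j) :
    μ.real {ω | Z j ω * Atil i j ω = 0} = if A i j = 1 then 1 - (1 - β) * p else 1 - α * p := by
  rw [(M.indepFun_treatment_obs hij).measureReal_mul_eq_zero_s10 (M.measurable_treatment j)
    (M.measurable_obs i j) (M.treatment_zero_or_one j) (M.obs_zero_or_one i j),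
    M.measureReal_treated, M.measureReal_obs_eq_one hij]
  split_ifs <;> ring

theorem measureReal_untreated_and_forall [IsProbabilityMeasure μ]
    (M : NoisyExposureModel μ A α β p Z Atil) (i : Fin N) {P : Fin N → ℕ × ℕ → Prop}
    (hP : ∀ w, P i (0, w)) {x y : ℝ}
    (hPxy : ∀ j, i ≠ j → μ.real {ω | P j (Z j ω, Atil i j ω)} = if A i j = 1 then x else y) :
    μ.real {ω | Z i ω = 0 ∧ ∀ j, P j (Z j ω, Atil i j ω)}
      = (1 - p) * x ^ (∑ j, A i j) * y ^ (N - 1 - ∑ j, A i j) := by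
  rw [(M.iIndepFun_treatment_obs i).measureReal_and_forall_eq_mul_prod i (R := fun b => b.1 = 0)
    (by rintro ⟨_, w⟩ rfl; exact hP w), M.measureReal_untreated,
    prod_congr rfl fun j hj => hPxy j (ne_of_mem_erase hj).symm,
    prod_erase_ite_eq_pow_sum (M.adj_zero_or_one i) (M.adj_diag i), mul_assoc]

theorem measureReal_untreated_unexposed [IsProbabilityMeasure μ]
    (M : NoisyExposureModel μ A α β p Z Atil) (i : Fin N) :
    μ.real {ω | Z i ω = 0 ∧ ∑ j, Z j ω * A i j = 0} = (1 - p) * (1 - p) ^ (∑ j, A i j) := by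
  have h := M.measureReal_untreated_and_forall i (P := fun j b => b.1 * A i j = 0)
    (x := 1 - p) (y := 1) (fun w => zero_mul _) fun j _ => by
      rcases M.adj_zero_or_one i j with hA | hA <;> simp [hA, M.measureReal_untreated]
  simpa [sum_eq_zero_iff] using h

theorem measureReal_untreated_obs_unexposed [IsProbabilityMeasure μ]
    (M : NoisyExposureModel μ A α β p Z Atil) (i : Fin N) :
    μ.real {ω | Z i ω = 0 ∧ ∑ j, Z j ω * Atil i j ω = 0}
      = (1 - p) * (1 - (1 - β) * p) ^ (∑ j, A i j) * (1 - α * p) ^ (N - 1 - ∑ j, A i j) := by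
  have h := M.measureReal_untreated_and_forall i (P := fun j b => b.1 * b.2 = 0)
    (fun w => zero_mul _) fun j hij => M.measureReal_mul_obs_eq_zero hij
  simpa [sum_eq_zero_iff] using h

theorem measureReal_untreated_obs_unexposed_and_unexposed [IsProbabilityMeasure μ]
    (M : NoisyExposureModel μ A α β p Z Atil) (i : Fin N) :
    μ.real {ω | (Z i ω = 0 ∧ ∑ j, Z j ω * Atil i j ω = 0) ∧
        (Z i ω = 0 ∧ ∑ j, Z j ω * A i j = 0)}
      = (1 - p) * (1 - p) ^ (∑ j, A i j) * (1 - α * p) ^ (N - 1 - ∑ j, A i j) := by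
  have h := M.measureReal_untreated_and_forall i (P := fun j b => b.1 * b.2 = 0 ∧ b.1 * A i j = 0)
    (x := 1 - p) (y := 1 - α * p) (fun w => ⟨zero_mul _, zero_mul _⟩) fun j hij => by
      rcases M.adj_zero_or_one i j with hA | hA
      · simp only [hA, mul_zero, and_true]
        rw [M.measureReal_mul_obs_eq_zero hij, if_neg (by omega), if_neg (by omega)]
      · have hset : {ω | Z j ω * Atil i j ω = 0 ∧ Z j ω * A i j = 0} = {ω | Z j ω = 0} := by
          ext ω
          simp only [hA, mul_one, Set.mem_ofPred_eq, and_iff_right_iff_imp]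
          intro h
          rw [h, zero_mul]
        rw [hset, M.measureReal_untreated, if_pos hA]
  convert h using 2
  ext ω
  simp only [Set.mem_ofPred_eq, sum_eq_zero_iff, mem_univ, forall_const, forall_and]
  tauto

end NoisyExposureModel

theorem confusion_matrix_untreated_block_general
    {Ω : Type} [MeasurableSpace Ω] (μ : Measure Ω) [IsProbabilityMeasure μ]
    (N : ℕ)
    (A : Fin N → Fin N → ℕ)
    (hAsymm : ∀ i j, A i j = A j i)
    (hAdiag : ∀ i, A i i = 0)
    (hA01 : ∀ i j, A i j = 0 ∨ A i j = 1)
    (α β p : ℝ) (hα0 : 0 ≤ α) (hβ1 : β ≤ 1)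
    (hp0 : 0 ≤ p)
    (Z : Fin N → Ω → ℕ)
    (hZmeas : ∀ i, Measurable (Z i))
    (hZ01 : ∀ i ω, Z i ω = 0 ∨ Z i ω = 1)
    (hZp : ∀ i, μ {ω | Z i ω = 1} = ENNReal.ofReal p)
    (Atil : Fin N → Fin N → Ω → ℕ)
    (hmeas : ∀ i j, Measurable (Atil i j))
    (hsymm : ∀ i j ω, Atil i j ω = Atil j i ω)
    (hdiag : ∀ i ω, Atil i i ω = 0)
    (h01 : ∀ i j ω, Atil i j ω = 0 ∨ Atil i j ω = 1)
    (hfalse : ∀ i j : Fin N, i < j → A i j = 0 →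
      μ {ω | Atil i j ω = 1} = ENNReal.ofReal α)
    (htrue : ∀ i j : Fin N, i < j → A i j = 1 →
      μ {ω | Atil i j ω = 1} = ENNReal.ofReal (1 - β))
    (hindep : iIndepFun
      (Sum.elim Z (fun e : {e : Fin N × Fin N // e.1 < e.2} => Atil e.1.1 e.1.2)) μ) :
    ∀ i : Fin N,
      -- P_i(c̃_00, c_00)
      (μ {ω | (Z i ω = 0 ∧ (∑ j, Z j ω * Atil i j ω) = 0)
            ∧ (Z i ω = 0 ∧ (∑ j, Z j ω * A i j) = 0)}
        = ENNReal.ofReal ((1 - p) * (1 - p) ^ (∑ j, A i j)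
            * (1 - α * p) ^ (N - 1 - (∑ j, A i j)))) ∧
      -- P_i(c̃_01, c_00)
      (μ {ω | (Z i ω = 0 ∧ 0 < ∑ j, Z j ω * Atil i j ω)
            ∧ (Z i ω = 0 ∧ (∑ j, Z j ω * A i j) = 0)}
        = ENNReal.ofReal ((1 - p) * (1 - p) ^ (∑ j, A i j)
            * (1 - (1 - α * p) ^ (N - 1 - (∑ j, A i j))))) ∧
      -- P_i(c̃_00, c_01)
      (μ {ω | (Z i ω = 0 ∧ (∑ j, Z j ω * Atil i j ω) = 0)
            ∧ (Z i ω = 0 ∧ 0 < ∑ j, Z j ω * A i j)}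
        = ENNReal.ofReal ((1 - p) * (1 - α * p) ^ (N - 1 - (∑ j, A i j))
            * ((1 - (1 - β) * p) ^ (∑ j, A i j) - (1 - p) ^ (∑ j, A i j)))) ∧
      -- P_i(c̃_01, c_01)
      (μ {ω | (Z i ω = 0 ∧ 0 < ∑ j, Z j ω * Atil i j ω)
            ∧ (Z i ω = 0 ∧ 0 < ∑ j, Z j ω * A i j)}
        = ENNReal.ofReal ((1 - p) * (1 - (1 - p) ^ (∑ j, A i j)
            - (1 - α * p) ^ (N - 1 - (∑ j, A i j))
              * ((1 - (1 - β) * p) ^ (∑ j, A i j) - (1 - p) ^ (∑ j, A i j))))) ∧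
      -- mixed treated/untreated entries vanish
      (μ {ω | (Z i ω = 1 ∧ 0 < ∑ j, Z j ω * Atil i j ω)
            ∧ (Z i ω = 0 ∧ 0 < ∑ j, Z j ω * A i j)} = 0) ∧
      (μ {ω | (Z i ω = 1 ∧ 0 < ∑ j, Z j ω * Atil i j ω)
            ∧ (Z i ω = 0 ∧ (∑ j, Z j ω * A i j) = 0)} = 0) ∧
      (μ {ω | (Z i ω = 1 ∧ (∑ j, Z j ω * Atil i j ω) = 0)
            ∧ (Z i ω = 0 ∧ 0 < ∑ j, Z j ω * A i j)} = 0) ∧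
      (μ {ω | (Z i ω = 1 ∧ (∑ j, Z j ω * Atil i j ω) = 0)
            ∧ (Z i ω = 0 ∧ (∑ j, Z j ω * A i j) = 0)} = 0) ∧
      (μ {ω | (Z i ω = 0 ∧ 0 < ∑ j, Z j ω * Atil i j ω)
            ∧ (Z i ω = 1 ∧ 0 < ∑ j, Z j ω * A i j)} = 0) ∧
      (μ {ω | (Z i ω = 0 ∧ 0 < ∑ j, Z j ω * Atil i j ω)
            ∧ (Z i ω = 1 ∧ (∑ j, Z j ω * A i j) = 0)} = 0) ∧
      (μ {ω | (Z i ω = 0 ∧ (∑ j, Z j ω * Atil i j ω) = 0)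
            ∧ (Z i ω = 1 ∧ 0 < ∑ j, Z j ω * A i j)} = 0) ∧
      (μ {ω | (Z i ω = 0 ∧ (∑ j, Z j ω * Atil i j ω) = 0)
            ∧ (Z i ω = 1 ∧ (∑ j, Z j ω * A i j) = 0)} = 0) := by
  intro i
  have M : NoisyExposureModel μ A α β p Z Atil := ⟨hAsymm, hAdiag, hA01, hα0, hβ1, hp0, hZmeas,
    hZ01, hZp, hmeas, hsymm, hdiag, h01, hfalse, htrue, hindep⟩
  have hnull : ∀ {a b : ℕ}, a ≠ b → ∀ P Q : Ω → Prop,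
      μ {ω | (Z i ω = a ∧ P ω) ∧ (Z i ω = b ∧ Q ω)} = 0 := fun hab _ _ =>
    measure_mono_null (fun _ ⟨⟨ha, _⟩, hb, _⟩ => (hab (ha.symm.trans hb)).elim) measure_empty
  have hu : MeasurableSet {ω | Z i ω = 0} := hZmeas i (measurableSet_singleton 0)
  have hobs_count : Measurable fun ω => ∑ j, Z j ω * Atil i j ω :=
    Finset.measurable_sum _ fun j _ => (hZmeas j).mul (hmeas i j)
  have htrue_count : Measurable fun ω => ∑ j, Z j ω * A i j :=
    Finset.measurable_sum _ fun j _ => (hZmeas j).mul_const _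
  have hboth := M.measureReal_untreated_obs_unexposed_and_unexposed i
  refine ⟨?_, ?_, ?_, ?_, hnull one_ne_zero _ _, hnull one_ne_zero _ _, hnull one_ne_zero _ _,
    hnull one_ne_zero _ _, hnull zero_ne_one _ _, hnull zero_ne_one _ _, hnull zero_ne_one _ _,
    hnull zero_ne_one _ _⟩
  · rw [← ofReal_measureReal, hboth]
  · rw [← ofReal_measureReal, measureReal_pos_and_eq_zero hu hobs_count,
      M.measureReal_untreated_unexposed, hboth]
    congr 1
    ring
  · rw [← ofReal_measureReal, measureReal_eq_zero_and_pos hu htrue_count,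
      M.measureReal_untreated_obs_unexposed, hboth]
    congr 1
    ring
  · rw [← ofReal_measureReal, measureReal_pos_and_pos hu hobs_count htrue_count,
      M.measureReal_untreated, M.measureReal_untreated_unexposed,
      M.measureReal_untreated_obs_unexposed, hboth]
    congr 1
    ring

/-- Confusion matrix entries of vertex `i` for the untreated block under
the four-level exposure model with noisy network observation and i.i.d. Bernoulli(p)
treatment, together with the vanishing of all entries mixing a treated observed
exposure with an untreated true exposure (or vice versa). -/
theorem confusion_matrix_untreated_block
    {Ω : Type} [MeasurableSpace Ω] (μ : Measure Ω) [IsProbabilityMeasure μ]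
    (N : ℕ)
    (A : Fin N → Fin N → ℕ)
    (hAsymm : ∀ i j, A i j = A j i)
    (hAdiag : ∀ i, A i i = 0)
    (hA01 : ∀ i j, A i j = 0 ∨ A i j = 1)
    (α β p : ℝ) (hα0 : 0 ≤ α) (hα1 : α ≤ 1) (hβ0 : 0 ≤ β) (hβ1 : β ≤ 1)
    (hp0 : 0 ≤ p) (hp1 : p ≤ 1)
    (Z : Fin N → Ω → ℕ)
    (hZmeas : ∀ i, Measurable (Z i))
    (hZ01 : ∀ i ω, Z i ω = 0 ∨ Z i ω = 1)
    (hZp : ∀ i, μ {ω | Z i ω = 1} = ENNReal.ofReal p)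
    (Atil : Fin N → Fin N → Ω → ℕ)
    (hmeas : ∀ i j, Measurable (Atil i j))
    (hsymm : ∀ i j ω, Atil i j ω = Atil j i ω)
    (hdiag : ∀ i ω, Atil i i ω = 0)
    (h01 : ∀ i j ω, Atil i j ω = 0 ∨ Atil i j ω = 1)
    (hfalse : ∀ i j : Fin N, i < j → A i j = 0 →
      μ {ω | Atil i j ω = 1} = ENNReal.ofReal α)
    (htrue : ∀ i j : Fin N, i < j → A i j = 1 →
      μ {ω | Atil i j ω = 1} = ENNReal.ofReal (1 - β))
    (hindep : iIndepFun
      (Sum.elim Z (fun e : {e : Fin N × Fin N // e.1 < e.2} => Atil e.1.1 e.1.2)) μ) :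
    ∀ i : Fin N,
      -- P_i(c̃_00, c_00)
      (μ {ω | (Z i ω = 0 ∧ (∑ j, Z j ω * Atil i j ω) = 0)
            ∧ (Z i ω = 0 ∧ (∑ j, Z j ω * A i j) = 0)}
        = ENNReal.ofReal ((1 - p) * (1 - p) ^ (∑ j, A i j)
            * (1 - α * p) ^ (N - 1 - (∑ j, A i j)))) ∧
      -- P_i(c̃_01, c_00)
      (μ {ω | (Z i ω = 0 ∧ 0 < ∑ j, Z j ω * Atil i j ω)
            ∧ (Z i ω = 0 ∧ (∑ j, Z j ω * A i j) = 0)}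
        = ENNReal.ofReal ((1 - p) * (1 - p) ^ (∑ j, A i j)
            * (1 - (1 - α * p) ^ (N - 1 - (∑ j, A i j))))) ∧
      -- P_i(c̃_00, c_01)
      (μ {ω | (Z i ω = 0 ∧ (∑ j, Z j ω * Atil i j ω) = 0)
            ∧ (Z i ω = 0 ∧ 0 < ∑ j, Z j ω * A i j)}
        = ENNReal.ofReal ((1 - p) * (1 - α * p) ^ (N - 1 - (∑ j, A i j))
            * ((1 - (1 - β) * p) ^ (∑ j, A i j) - (1 - p) ^ (∑ j, A i j)))) ∧
      -- P_i(c̃_01, c_01)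
      (μ {ω | (Z i ω = 0 ∧ 0 < ∑ j, Z j ω * Atil i j ω)
            ∧ (Z i ω = 0 ∧ 0 < ∑ j, Z j ω * A i j)}
        = ENNReal.ofReal ((1 - p) * (1 - (1 - p) ^ (∑ j, A i j)
            - (1 - α * p) ^ (N - 1 - (∑ j, A i j))
              * ((1 - (1 - β) * p) ^ (∑ j, A i j) - (1 - p) ^ (∑ j, A i j))))) ∧
      -- mixed treated/untreated entries vanish
      (μ {ω | (Z i ω = 1 ∧ 0 < ∑ j, Z j ω * Atil i j ω)
            ∧ (Z i ω = 0 ∧ 0 < ∑ j, Z j ω * A i j)} = 0) ∧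
      (μ {ω | (Z i ω = 1 ∧ 0 < ∑ j, Z j ω * Atil i j ω)
            ∧ (Z i ω = 0 ∧ (∑ j, Z j ω * A i j) = 0)} = 0) ∧
      (μ {ω | (Z i ω = 1 ∧ (∑ j, Z j ω * Atil i j ω) = 0)
            ∧ (Z i ω = 0 ∧ 0 < ∑ j, Z j ω * A i j)} = 0) ∧
      (μ {ω | (Z i ω = 1 ∧ (∑ j, Z j ω * Atil i j ω) = 0)
            ∧ (Z i ω = 0 ∧ (∑ j, Z j ω * A i j) = 0)} = 0) ∧
      (μ {ω | (Z i ω = 0 ∧ 0 < ∑ j, Z j ω * Atil i j ω)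
            ∧ (Z i ω = 1 ∧ 0 < ∑ j, Z j ω * A i j)} = 0) ∧
      (μ {ω | (Z i ω = 0 ∧ 0 < ∑ j, Z j ω * Atil i j ω)
            ∧ (Z i ω = 1 ∧ (∑ j, Z j ω * A i j) = 0)} = 0) ∧
      (μ {ω | (Z i ω = 0 ∧ (∑ j, Z j ω * Atil i j ω) = 0)
            ∧ (Z i ω = 1 ∧ 0 < ∑ j, Z j ω * A i j)} = 0) ∧
      (μ {ω | (Z i ω = 0 ∧ (∑ j, Z j ω * Atil i j ω) = 0)
            ∧ (Z i ω = 1 ∧ (∑ j, Z j ω * A i j) = 0)} = 0) :=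
  confusion_matrix_untreated_block_general μ N A hAsymm hAdiag hA01 α β p hα0 hβ1 hp0 Z hZmeas hZ01
    hZp Atil hmeas hsymm hdiag h01 hfalse htrue hindep
end

section
/- Under the four-level exposure model with noisy network observation and i.i.d. Bernoulli(p) treatment with 0 < p < 1, the Aronow–Samii estimator computed from the noisy network satisfies the exact bias identity E[ ȳ̃_{A&S}(c_{10}) ] − (1/N) Σ_{i=1}^N y_i(c_{10}) = (1/N) Σ_{i=1}^N [ 1 − (1 − βp)^{d_i} ] ( y_i(c_{11}) − y_i(c_{10}) ). -/
/-!
On the event `Z_i = 1`, the indicator of observed exposure `c₁₀` divided by `p̃_i(c₁₀)` equals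
`p⁻¹ ∏_{j ≠ i} (1 - Z_j Ã_ij) / (1 - p) ^ Ã_ij`, and the outcome at the true exposure equals
`y_i(c₁₁) + (y_i(c₁₀) - y_i(c₁₁)) ∏_j (1 - Z_j A_ij)`. So the summand of vertex `i` is a
combination of two products over `j` of functions of the pairs `(Z_j, Ã_ij)`, the factor of `j = i`
being `Z_i`. These pairs are built from disjoint blocks of the independent family, so each
expectation factorizes. A factor `(1 - Z_j Ã_ij) / (1 - p) ^ Ã_ij` has mean `1` whatever the law
of `Ã_ij`, which is why false edges do not matter; multiplied by `1 - Z_j` for a true neighbour `j`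
its mean is `β (1 - p) + (1 - β) = 1 - β p`.
-/

open MeasureTheory ProbabilityTheory

section IndependentBlocks

variable {Ω ι κ : Type*} {mΩ : MeasurableSpace Ω} {μ : Measure Ω}
  {m : ι → MeasurableSpace Ω} {S : κ → Set ι} {F : κ → Ω → ℝ}

theorem indepFun_finset_prod_of_iIndep (h_le : ∀ i, m i ≤ mΩ) (h_indep : iIndep m μ)
    (hF : ∀ k, Measurable[⨆ i ∈ S k, m i] (F k)) {k : κ} {s : Finset κ}
    (hks : ∀ k' ∈ s, Disjoint (S k) (S k')) :
    IndepFun (F k) (fun ω => ∏ k' ∈ s, F k' ω) μ := by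
  have hprod : Measurable[⨆ i ∈ ⋃ k' ∈ s, S k', m i] fun ω => ∏ k' ∈ s, F k' ω :=
    Finset.measurable_prod s fun k' hk' =>
      (hF k').mono (biSup_mono fun i hi => Set.mem_biUnion hk' hi) le_rfl
  rw [IndepFun_iff_Indep]
  exact indep_of_indep_of_le
    (indep_iSup_of_disjoint h_le h_indep (Set.disjoint_iUnion₂_right.2 hks))
    (hF k).comap_le hprod.comap_le

theorem integral_finset_prod_of_iIndep [IsProbabilityMeasure μ] (h_le : ∀ i, m i ≤ mΩ)
    (h_indep : iIndep m μ) (hF : ∀ k, Measurable[⨆ i ∈ S k, m i] (F k)) (s : Finset κ)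
    (hS : (s : Set κ).PairwiseDisjoint S) :
    ∫ ω, ∏ k ∈ s, F k ω ∂μ = ∏ k ∈ s, ∫ ω, F k ω ∂μ := by
  classical
  have hFm : ∀ k, Measurable (F k) := fun k => (hF k).mono (iSup₂_le fun i _ => h_le i) le_rfl
  induction s using Finset.induction_on with
  | empty => simp
  | insert k s hk ih =>
    have hks : ∀ k' ∈ s, Disjoint (S k) (S k') := fun k' hk' =>
      hS (by simp) (by simp [hk']) (ne_of_mem_of_not_mem hk' hk).symm
    simp_rw [Finset.prod_insert hk, ← ih (hS.subset (by simp))]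
    exact (indepFun_finset_prod_of_iIndep h_le h_indep hF hks).integral_fun_mul_eq_mul_integral
      (hFm k).aestronglyMeasurable (Finset.measurable_prod s fun k _ => hFm k).aestronglyMeasurable

end IndependentBlocks

section ZeroOne

variable {Ω : Type*} {mΩ : MeasurableSpace Ω} {μ : Measure Ω} [IsProbabilityMeasure μ]

theorem integrable_comp_of_forall_mem_finset {α : Type*} [MeasurableSpace α] [Countable α]
    [MeasurableSingletonClass α] {W : Ω → α} (hW : Measurable W) {t : Finset α}
    (ht : ∀ ω, W ω ∈ t) (g : α → ℝ) : Integrable (fun ω => g (W ω)) μ :=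
  .of_bound ((measurable_of_countable g).comp hW).aestronglyMeasurable (∑ a ∈ t, ‖g a‖)
    (ae_of_all _ fun ω => Finset.single_le_sum (fun a _ => norm_nonneg (g a)) (ht ω))

theorem integral_comp_of_zero_one {X : Ω → ℕ} (hX : Measurable X)
    (hX01 : ∀ ω, X ω = 0 ∨ X ω = 1) (f : ℕ → ℝ) :
    ∫ ω, f (X ω) ∂μ = (1 - μ.real {ω | X ω = 1}) * f 0 + μ.real {ω | X ω = 1} * f 1 := by
  have hset : MeasurableSet {ω | X ω = 1} := hX (measurableSet_singleton 1)
  have hdecomp :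
      (fun ω => f (X ω)) = fun ω => f 0 + (f 1 - f 0) * {ω | X ω = 1}.indicator 1 ω := by
    funext ω
    rcases hX01 ω with h | h <;> simp [h]
  rw [hdecomp, integral_add (integrable_const _) ((integrable_indicator_iff hset).2
      (integrable_const 1).integrableOn |>.const_mul _), integral_const, integral_const_mul,
    integral_indicator_one hset, probReal_univ, smul_eq_mul]
  ring

theorem integral_comp₂_of_indepFun_of_zero_one {X Y : Ω → ℕ} (hX : Measurable X)
    (hY : Measurable Y) (hX01 : ∀ ω, X ω = 0 ∨ X ω = 1) (hY01 : ∀ ω, Y ω = 0 ∨ Y ω = 1)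
    (hXY : IndepFun X Y μ) (g : ℕ → ℕ → ℝ) :
    ∫ ω, g (X ω) (Y ω) ∂μ = (1 - μ.real {ω | Y ω = 1}) * ∫ ω, g (X ω) 0 ∂μ
      + μ.real {ω | Y ω = 1} * ∫ ω, g (X ω) 1 ∂μ := by
  have hdecomp : (fun ω => g (X ω) (Y ω))
      = fun ω => g (X ω) 0 * (1 - (Y ω : ℝ)) + g (X ω) 1 * (Y ω : ℝ) := by
    funext ω
    rcases hY01 ω with h | h <;> simp [h]
  have hint : ∀ f h : ℕ → ℝ, Integrable (fun ω => f (X ω) * h (Y ω)) μ := fun f h =>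
    integrable_comp_of_forall_mem_finset (hX.prodMk hY) (t := {0, 1} ×ˢ {0, 1})
      (fun ω => by rcases hX01 ω with h | h <;> rcases hY01 ω with h' | h' <;> simp [h, h'])
      (fun v => f v.1 * h v.2)
  have hmul : ∀ f h : ℕ → ℝ,
      ∫ ω, f (X ω) * h (Y ω) ∂μ = (∫ ω, f (X ω) ∂μ) * ∫ ω, h (Y ω) ∂μ := fun f h =>
    hXY.integral_fun_comp_mul_comp hX.aemeasurable hY.aemeasurable
      (measurable_of_countable f).aestronglyMeasurable
      (measurable_of_countable h).aestronglyMeasurable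
  rw [hdecomp, integral_add (hint (g · 0) fun n => 1 - (n : ℝ)) (hint (g · 1) Nat.cast),
    hmul (g · 0) fun n => 1 - (n : ℝ), hmul (g · 1) Nat.cast,
    integral_comp_of_zero_one hY hY01 fun n => 1 - (n : ℝ),
    integral_comp_of_zero_one hY hY01 Nat.cast]
  simp only [Nat.cast_zero, Nat.cast_one, sub_zero, sub_self]
  ring

end ZeroOne

theorem ite_sum_eq_zero_eq_prod_one_sub {ι : Type*} (s : Finset ι) {u : ι → ℕ}
    (hu : ∀ j ∈ s, u j = 0 ∨ u j = 1) :
    (if ∑ j ∈ s, u j = 0 then (1 : ℝ) else 0) = ∏ j ∈ s, (1 - (u j : ℝ)) := by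
  split_ifs with h
  · rw [Finset.sum_eq_zero_iff] at h
    exact (Finset.prod_eq_one fun j hj => by simp [h j hj]).symm
  · obtain ⟨j, hj, hne⟩ : ∃ j ∈ s, u j ≠ 0 := by simpa [Finset.sum_eq_zero_iff] using h
    have huj : u j = 1 := (hu j hj).resolve_left hne
    exact (Finset.prod_eq_zero hj (by simp [huj])).symm

section C10Weight

noncomputable def c10Weight (p : ℝ) (z a : ℕ) : ℝ := (1 - z * a) / (1 - p) ^ a

noncomputable def c10Factor {N : ℕ} (p : ℝ) (i j : Fin N) (z a : ℕ) : ℝ :=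
  if j = i then z else c10Weight p z a

theorem integral_c10Weight_mul {Ω : Type*} {mΩ : MeasurableSpace Ω} {μ : Measure Ω}
    [IsProbabilityMeasure μ] {X Y : Ω → ℕ} (hX : Measurable X) (hY : Measurable Y)
    (hX01 : ∀ ω, X ω = 0 ∨ X ω = 1) (hY01 : ∀ ω, Y ω = 0 ∨ Y ω = 1) (hXY : IndepFun X Y μ)
    {p : ℝ} (hp1 : p < 1) (hXp : μ.real {ω | X ω = 1} = p) (b : ℝ) :
    ∫ ω, c10Weight p (X ω) (Y ω) * (1 - X ω * b) ∂μ
      = 1 - p * b * (1 - μ.real {ω | Y ω = 1}) := by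
  have hq : 1 - p ≠ 0 := by linarith
  rw [integral_comp₂_of_indepFun_of_zero_one hX hY hX01 hY01 hXY
      (fun x y => c10Weight p x y * (1 - x * b)),
    integral_comp_of_zero_one hX hX01 fun x => c10Weight p x 0 * (1 - x * b),
    integral_comp_of_zero_one hX hX01 fun x => c10Weight p x 1 * (1 - x * b), hXp]
  simp only [c10Weight]
  field_simp
  ring

theorem c10_summand_eq_prod_c10Factor {N : ℕ} {p : ℝ} (hp0 : 0 < p) (hp1 : p < 1) {i : Fin N}
    {z a A : Fin N → ℕ} (hz : ∀ j, z j = 0 ∨ z j = 1) (ha : ∀ j, a j = 0 ∨ a j = 1)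
    (hai : a i = 0) (hA : ∀ j, A j = 0 ∨ A j = 1) (y : Fin 4 → ℝ) :
    (if 0 < p * (1 - p) ^ (∑ j, a j) then (1:ℝ) else 0)
        * (if z i = 1 ∧ (∑ j, z j * a j) = 0 then (1:ℝ) else 0)
        * (p * (1 - p) ^ (∑ j, a j))⁻¹
        * (if z i = 1 then (if 0 < ∑ j, z j * A j then y 0 else y 1)
            else (if 0 < ∑ j, z j * A j then y 2 else y 3))
      = p⁻¹ * (y 0 * ∏ j, c10Factor p i j (z j) (a j)
          + (y 1 - y 0) * ∏ j, c10Factor p i j (z j) (a j) * (1 - z j * A j)) := by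
  have hmul01 : ∀ b : Fin N → ℕ, (∀ j, b j = 0 ∨ b j = 1) →
      ∀ j ∈ Finset.univ, z j * b j = 0 ∨ z j * b j = 1 := fun b hb j _ => by
    rcases hz j with h | h <;> rcases hb j with h' | h' <;> simp [h, h']
  rcases hz i with hzi | hzi
  · have hfactor : c10Factor p i i (z i) (a i) = 0 := by simp [c10Factor, hzi]
    rw [Finset.prod_eq_zero (Finset.mem_univ i) hfactor,
      Finset.prod_eq_zero (Finset.mem_univ i) (by rw [hfactor, zero_mul])]
    simp [hzi]
  · have hweight : (if ∑ j, z j * a j = 0 then (1:ℝ) else 0) * ((1 - p) ^ (∑ j, a j))⁻¹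
        = ∏ j, c10Weight p (z j) (a j) := by
      rw [ite_sum_eq_zero_eq_prod_one_sub _ (hmul01 a ha), ← Finset.prod_pow_eq_pow_sum,
        ← Finset.prod_inv_distrib, ← Finset.prod_mul_distrib]
      simp [c10Weight, div_eq_mul_inv]
    have hfactor : ∏ j, c10Factor p i j (z j) (a j) = ∏ j, c10Weight p (z j) (a j) :=
      Finset.prod_congr rfl fun j _ => by
        by_cases hj : j = i
        · subst hj; simp [c10Factor, c10Weight, hzi, hai]
        · simp [c10Factor, hj]
    have houtcome : (if 0 < ∑ j, z j * A j then y 0 else y 1)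
        = y 0 + (y 1 - y 0) * ∏ j, (1 - (z j : ℝ) * A j) := by
      have hprod := ite_sum_eq_zero_eq_prod_one_sub Finset.univ (hmul01 A hA)
      push_cast at hprod
      rw [← hprod]
      by_cases h : ∑ j, z j * A j = 0
      · rw [if_neg (by omega), if_pos h]; ring
      · rw [if_pos (by omega), if_neg h]; ring
    have hpos : 0 < p * (1 - p) ^ (∑ j, a j) := by
      have : 0 < 1 - p := by linarith
      positivity
    simp only [hzi, true_and, if_true, if_pos hpos, one_mul, mul_inv]
    rw [Finset.prod_mul_distrib, hfactor, ← hweight, houtcome]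
    ring

end C10Weight

section EdgeBlocks

variable {N : ℕ}

def edgeIndex (i j : Fin N) : Fin N ⊕ {e : Fin N × Fin N // e.1 < e.2} :=
  if h : i < j then .inr ⟨(i, j), h⟩ else if h' : j < i then .inr ⟨(j, i), h'⟩ else .inl i

/-- The indices of `Z_j` and `Ã_ij` in the independent family; since `edgeIndex i i = .inl i`,
the block of `j = i` is `{.inl i}`. -/
def edgeBlock (i j : Fin N) : Set (Fin N ⊕ {e : Fin N × Fin N // e.1 < e.2}) :=
  {.inl j, edgeIndex i j}

theorem inl_eq_edgeIndex_iff {i j k : Fin N} : .inl k = edgeIndex i j ↔ j = i ∧ k = i := by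
  unfold edgeIndex
  split_ifs with h h' <;> simp <;> omega

theorem edgeIndex_injective (i : Fin N) : Function.Injective (edgeIndex i) := by
  intro j j' h
  unfold edgeIndex at h
  split_ifs at h <;> simp at h <;> omega

theorem pairwiseDisjoint_edgeBlock (i : Fin N) :
    (Set.univ : Set (Fin N)).PairwiseDisjoint (edgeBlock i) := by
  intro j _ j' _ hne
  have := (edgeIndex_injective i).ne hne
  change Disjoint (edgeBlock i j) (edgeBlock i j')
  simp only [edgeBlock, Set.disjoint_insert_left, Set.disjoint_insert_right,
    Set.disjoint_singleton, Set.mem_insert_iff, Set.mem_singleton_iff, Sum.inl.injEq,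
    inl_eq_edgeIndex_iff]
  grind

theorem sumElim_edgeIndex {Ω : Type*} (Z : Fin N → Ω → ℕ) {Atil : Fin N → Fin N → Ω → ℕ}
    (hsymm : ∀ i j ω, Atil i j ω = Atil j i ω) {i j : Fin N} (hji : j ≠ i) :
    Sum.elim Z (fun e : {e : Fin N × Fin N // e.1 < e.2} => Atil e.1.1 e.1.2) (edgeIndex i j)
      = Atil i j := by
  unfold edgeIndex
  split_ifs with h h'
  · rfl
  · exact funext fun ω => hsymm j i ω
  · omega

end EdgeBlocks

section Network

variable {Ω : Type*} {mΩ : MeasurableSpace Ω} {μ : Measure Ω} {N : ℕ}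

theorem integral_prod_comp_treatment_edge [IsProbabilityMeasure μ] {Z : Fin N → Ω → ℕ}
    (hZmeas : ∀ i, Measurable (Z i)) {Atil : Fin N → Fin N → Ω → ℕ}
    (hmeas : ∀ i j, Measurable (Atil i j)) (hsymm : ∀ i j ω, Atil i j ω = Atil j i ω)
    (hdiag : ∀ i ω, Atil i i ω = 0)
    (hindep : iIndepFun
      (Sum.elim Z (fun e : {e : Fin N × Fin N // e.1 < e.2} => Atil e.1.1 e.1.2)) μ)
    (i : Fin N) (g : Fin N → ℕ → ℕ → ℝ) :
    ∫ ω, ∏ j, g j (Z j ω) (Atil i j ω) ∂μ = ∏ j, ∫ ω, g j (Z j ω) (Atil i j ω) ∂μ := by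
  set X := Sum.elim Z (fun e : {e : Fin N × Fin N // e.1 < e.2} => Atil e.1.1 e.1.2)
  have hX : ∀ k, Measurable (X k) := by
    rintro (j | e)
    exacts [hZmeas j, hmeas _ _]
  set m := fun k => MeasurableSpace.comap (X k) inferInstance
  have hblock : ∀ j, ∀ k ∈ edgeBlock i j, Measurable[⨆ k' ∈ edgeBlock i j, m k'] (X k) :=
    fun j k hk => (comap_measurable (X k)).mono (le_iSup₂ (f := fun k' _ => m k') k hk) le_rfl
  have hpair : ∀ j, Measurable[⨆ k ∈ edgeBlock i j, m k] fun ω => (Z j ω, Atil i j ω) := by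
    intro j
    refine (hblock j (.inl j) (by simp [edgeBlock])).prodMk ?_
    by_cases hji : j = i
    · rw [hji, show Atil i i = fun _ => 0 from funext (hdiag i)]
      exact measurable_const
    · rw [← sumElim_edgeIndex Z hsymm hji]
      exact hblock j _ (by simp [edgeBlock])
  exact integral_finset_prod_of_iIndep (fun k => (hX k).comap_le)
    ((iIndepFun_iff_iIndep _ _ _).1 hindep)
    (fun j => (measurable_of_countable (Function.uncurry (g j))).comp (hpair j)) Finset.univ
    (by simpa using pairwiseDisjoint_edgeBlock i)

theorem integrable_prod_comp_treatment_edge [IsProbabilityMeasure μ] {Z : Fin N → Ω → ℕ}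
    (hZmeas : ∀ i, Measurable (Z i)) (hZ01 : ∀ i ω, Z i ω = 0 ∨ Z i ω = 1)
    {Atil : Fin N → Fin N → Ω → ℕ} (hmeas : ∀ i j, Measurable (Atil i j))
    (h01 : ∀ i j ω, Atil i j ω = 0 ∨ Atil i j ω = 1) (i : Fin N) (g : Fin N → ℕ → ℕ → ℝ) :
    Integrable (fun ω => ∏ j, g j (Z j ω) (Atil i j ω)) μ :=
  integrable_comp_of_forall_mem_finset (W := fun ω j => (Z j ω, Atil i j ω))
    (measurable_pi_lambda _ fun j => (hZmeas j).prodMk (hmeas i j))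
    (t := Fintype.piFinset fun _ => {0, 1} ×ˢ {0, 1})
    (fun ω => Fintype.mem_piFinset.2 fun j => by
      rcases hZ01 j ω with h | h <;> rcases h01 i j ω with h' | h' <;> simp [h, h'])
    (fun v => ∏ j, g j (v j).1 (v j).2)

theorem measureReal_atil_eq_one_of_adj {A : Fin N → Fin N → ℕ} (hAsymm : ∀ i j, A i j = A j i)
    {β : ℝ} (hβ1 : β ≤ 1) {Atil : Fin N → Fin N → Ω → ℕ}
    (hsymm : ∀ i j ω, Atil i j ω = Atil j i ω)
    (htrue : ∀ i j : Fin N, i < j → A i j = 1 →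
      μ {ω | Atil i j ω = 1} = ENNReal.ofReal (1 - β))
    {i j : Fin N} (hji : j ≠ i) (hA : A i j = 1) :
    μ.real {ω | Atil i j ω = 1} = 1 - β := by
  have hmeasure : μ {ω | Atil i j ω = 1} = ENNReal.ofReal (1 - β) := by
    rcases hji.lt_or_gt with h | h
    · simp_rw [hsymm i j]
      exact htrue j i h (hAsymm i j ▸ hA)
    · exact htrue i j h hA
  rw [measureReal_def, hmeasure, ENNReal.toReal_ofReal (by linarith)]

theorem integral_inv_mul_prod_c10Factor [IsProbabilityMeasure μ] {A : Fin N → Fin N → ℕ}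
    (hAsymm : ∀ i j, A i j = A j i) (hAdiag : ∀ i, A i i = 0)
    (hA01 : ∀ i j, A i j = 0 ∨ A i j = 1) {β p : ℝ} (hβ1 : β ≤ 1) (hp0 : 0 < p) (hp1 : p < 1)
    {Z : Fin N → Ω → ℕ} (hZmeas : ∀ i, Measurable (Z i))
    (hZ01 : ∀ i ω, Z i ω = 0 ∨ Z i ω = 1) (hZp : ∀ i, μ {ω | Z i ω = 1} = ENNReal.ofReal p)
    {Atil : Fin N → Fin N → Ω → ℕ} (hmeas : ∀ i j, Measurable (Atil i j))
    (hsymm : ∀ i j ω, Atil i j ω = Atil j i ω) (hdiag : ∀ i ω, Atil i i ω = 0)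
    (h01 : ∀ i j ω, Atil i j ω = 0 ∨ Atil i j ω = 1)
    (htrue : ∀ i j : Fin N, i < j → A i j = 1 →
      μ {ω | Atil i j ω = 1} = ENNReal.ofReal (1 - β))
    (hindep : iIndepFun
      (Sum.elim Z (fun e : {e : Fin N × Fin N // e.1 < e.2} => Atil e.1.1 e.1.2)) μ)
    (i : Fin N) (y : Fin 4 → ℝ) :
    ∫ ω, p⁻¹ * (y 0 * ∏ j, c10Factor p i j (Z j ω) (Atil i j ω)
        + (y 1 - y 0) * ∏ j, c10Factor p i j (Z j ω) (Atil i j ω) * (1 - Z j ω * A i j)) ∂μ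
      = y 0 + (y 1 - y 0) * (1 - β * p) ^ (∑ j, A i j) := by
  have hZreal : ∀ j, μ.real {ω | Z j ω = 1} = p := fun j => by
    rw [measureReal_def, hZp, ENNReal.toReal_ofReal hp0.le]
  have hself : ∫ ω, (Z i ω : ℝ) ∂μ = p := by
    rw [integral_comp_of_zero_one (hZmeas i) (hZ01 i) Nat.cast, hZreal]
    simp
  have hneighbour : ∀ j ≠ i, ∀ b : ℝ,
      ∫ ω, c10Factor p i j (Z j ω) (Atil i j ω) * (1 - Z j ω * b) ∂μ
        = 1 - p * b * (1 - μ.real {ω | Atil i j ω = 1}) := fun j hji b => by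
    have hindep_j : IndepFun (Z j) (Atil i j) μ := by
      rw [← sumElim_edgeIndex Z hsymm hji]
      exact hindep.indepFun fun h => hji (inl_eq_edgeIndex_iff.1 h).1
    simp only [c10Factor, if_neg hji]
    exact integral_c10Weight_mul (hZmeas j) (hmeas i j) (hZ01 j) (h01 i j) hindep_j hp1
      (hZreal j) b
  have hP : ∏ j, ∫ ω, c10Factor p i j (Z j ω) (Atil i j ω) ∂μ = p := by
    rw [← Finset.mul_prod_erase _ _ (Finset.mem_univ i), Finset.prod_eq_one fun j hj => by
      simpa using hneighbour j (Finset.ne_of_mem_erase hj) 0]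
    simpa [c10Factor, hdiag] using hself
  have hQ : ∏ j, ∫ ω, c10Factor p i j (Z j ω) (Atil i j ω) * (1 - Z j ω * A i j) ∂μ
      = p * (1 - β * p) ^ (∑ j, A i j) := by
    rw [← Finset.mul_prod_erase _ _ (Finset.mem_univ i), ← Finset.sum_erase _ (hAdiag i),
      ← Finset.prod_pow_eq_pow_sum]
    congr 1
    · simpa [c10Factor, hdiag, hAdiag] using hself
    · refine Finset.prod_congr rfl fun j hj => ?_
      have hji := Finset.ne_of_mem_erase hj
      rw [hneighbour j hji]
      rcases hA01 i j with hA | hA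
      · simp [hA]
      · rw [hA, measureReal_atil_eq_one_of_adj hAsymm hβ1 hsymm htrue hji hA]
        push_cast
        ring
  have hint := integrable_prod_comp_treatment_edge (μ := μ) hZmeas hZ01 hmeas h01 i
  rw [integral_const_mul, integral_add ((hint _).const_mul _)
      ((hint fun j z a => c10Factor p i j z a * (1 - z * A i j)).const_mul _),
    integral_const_mul, integral_const_mul,
    integral_prod_comp_treatment_edge hZmeas hmeas hsymm hdiag hindep i,
    integral_prod_comp_treatment_edge hZmeas hmeas hsymm hdiag hindep i
      fun j z a => c10Factor p i j z a * (1 - z * A i j), hP, hQ]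
  field_simp

end Network

theorem aronow_samii_bias_c10_general
    {Ω : Type} [MeasurableSpace Ω] (μ : Measure Ω) [IsProbabilityMeasure μ]
    (N : ℕ)
    (A : Fin N → Fin N → ℕ)
    (hAsymm : ∀ i j, A i j = A j i)
    (hAdiag : ∀ i, A i i = 0)
    (hA01 : ∀ i j, A i j = 0 ∨ A i j = 1)
    (β p : ℝ) (hβ1 : β ≤ 1)
    (hp0 : 0 < p) (hp1 : p < 1)
    (Z : Fin N → Ω → ℕ)
    (hZmeas : ∀ i, Measurable (Z i))
    (hZ01 : ∀ i ω, Z i ω = 0 ∨ Z i ω = 1)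
    (hZp : ∀ i, μ {ω | Z i ω = 1} = ENNReal.ofReal p)
    (Atil : Fin N → Fin N → Ω → ℕ)
    (hmeas : ∀ i j, Measurable (Atil i j))
    (hsymm : ∀ i j ω, Atil i j ω = Atil j i ω)
    (hdiag : ∀ i ω, Atil i i ω = 0)
    (h01 : ∀ i j ω, Atil i j ω = 0 ∨ Atil i j ω = 1)
    (htrue : ∀ i j : Fin N, i < j → A i j = 1 →
      μ {ω | Atil i j ω = 1} = ENNReal.ofReal (1 - β))
    (hindep : iIndepFun
      (Sum.elim Z (fun e : {e : Fin N × Fin N // e.1 < e.2} => Atil e.1.1 e.1.2)) μ)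
    -- fixed potential outcomes, indexed 0 ↦ c_11, 1 ↦ c_10, 2 ↦ c_01, 3 ↦ c_00
    (y : Fin N → Fin 4 → ℝ) :
    (∫ ω, (N : ℝ)⁻¹ * ∑ i,
        -- ỹ_{A&S,i}(c_10): indicator of positive observed exposure probability,
        -- times indicator of observed exposure c_10, divided by p̃_i(c_10),
        -- times the outcome at the true exposure
        ((if 0 < p * (1 - p) ^ (∑ j, Atil i j ω) then (1:ℝ) else 0)
          * (if Z i ω = 1 ∧ (∑ j, Z j ω * Atil i j ω) = 0 then (1:ℝ) else 0)
          * (p * (1 - p) ^ (∑ j, Atil i j ω))⁻¹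
          * (if Z i ω = 1 then
              (if 0 < ∑ j, Z j ω * A i j then y i 0 else y i 1)
             else
              (if 0 < ∑ j, Z j ω * A i j then y i 2 else y i 3))) ∂μ)
      - (N : ℝ)⁻¹ * ∑ i, y i 1
      = (N : ℝ)⁻¹ * ∑ i, (1 - (1 - β * p) ^ (∑ j, A i j)) * (y i 0 - y i 1) := by
  have hsummand := fun i ω => c10_summand_eq_prod_c10Factor hp0 hp1 (i := i) (z := fun j => Z j ω)
    (a := fun j => Atil i j ω) (hZ01 · ω) (h01 i · ω) (hdiag i ω) (hA01 i) (y i)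
  have hint := integrable_prod_comp_treatment_edge (μ := μ) hZmeas hZ01 hmeas h01
  simp only [hsummand]
  rw [integral_const_mul, integral_finsetSum _ fun i _ => ?_,
    Finset.sum_congr rfl fun i _ => integral_inv_mul_prod_c10Factor hAsymm hAdiag hA01 hβ1 hp0
      hp1 hZmeas hZ01 hZp hmeas hsymm hdiag h01 htrue hindep i (y i),
    ← mul_sub, ← Finset.sum_sub_distrib]
  · exact congrArg _ (Finset.sum_congr rfl fun i _ => by ring)
  · exact (((hint i _).const_mul _).add
      ((hint i fun j z a => c10Factor p i j z a * (1 - z * A i j)).const_mul _)).const_mul _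

/-- Exact bias identity for the Aronow–Samii estimator of `ȳ(c_10)`
computed from the noisy network, under the four-level exposure model and i.i.d.
Bernoulli(p) treatment with 0 < p < 1. Outcomes are indexed by
0 ↦ c_11, 1 ↦ c_10, 2 ↦ c_01, 3 ↦ c_00. -/
theorem aronow_samii_bias_c10
    {Ω : Type} [MeasurableSpace Ω] (μ : Measure Ω) [IsProbabilityMeasure μ]
    (N : ℕ)
    (A : Fin N → Fin N → ℕ)
    (hAsymm : ∀ i j, A i j = A j i)
    (hAdiag : ∀ i, A i i = 0)
    (hA01 : ∀ i j, A i j = 0 ∨ A i j = 1)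
    (α β p : ℝ) (hα0 : 0 ≤ α) (hα1 : α ≤ 1) (hβ0 : 0 ≤ β) (hβ1 : β ≤ 1)
    (hp0 : 0 < p) (hp1 : p < 1)
    (Z : Fin N → Ω → ℕ)
    (hZmeas : ∀ i, Measurable (Z i))
    (hZ01 : ∀ i ω, Z i ω = 0 ∨ Z i ω = 1)
    (hZp : ∀ i, μ {ω | Z i ω = 1} = ENNReal.ofReal p)
    (Atil : Fin N → Fin N → Ω → ℕ)
    (hmeas : ∀ i j, Measurable (Atil i j))
    (hsymm : ∀ i j ω, Atil i j ω = Atil j i ω)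
    (hdiag : ∀ i ω, Atil i i ω = 0)
    (h01 : ∀ i j ω, Atil i j ω = 0 ∨ Atil i j ω = 1)
    (hfalse : ∀ i j : Fin N, i < j → A i j = 0 →
      μ {ω | Atil i j ω = 1} = ENNReal.ofReal α)
    (htrue : ∀ i j : Fin N, i < j → A i j = 1 →
      μ {ω | Atil i j ω = 1} = ENNReal.ofReal (1 - β))
    (hindep : iIndepFun
      (Sum.elim Z (fun e : {e : Fin N × Fin N // e.1 < e.2} => Atil e.1.1 e.1.2)) μ)
    -- fixed potential outcomes, indexed 0 ↦ c_11, 1 ↦ c_10, 2 ↦ c_01, 3 ↦ c_00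
    (y : Fin N → Fin 4 → ℝ) :
    (∫ ω, (N : ℝ)⁻¹ * ∑ i,
        -- ỹ_{A&S,i}(c_10): indicator of positive observed exposure probability,
        -- times indicator of observed exposure c_10, divided by p̃_i(c_10),
        -- times the outcome at the true exposure
        ((if 0 < p * (1 - p) ^ (∑ j, Atil i j ω) then (1:ℝ) else 0)
          * (if Z i ω = 1 ∧ (∑ j, Z j ω * Atil i j ω) = 0 then (1:ℝ) else 0)
          * (p * (1 - p) ^ (∑ j, Atil i j ω))⁻¹
          * (if Z i ω = 1 then
              (if 0 < ∑ j, Z j ω * A i j then y i 0 else y i 1)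
             else
              (if 0 < ∑ j, Z j ω * A i j then y i 2 else y i 3))) ∂μ)
      - (N : ℝ)⁻¹ * ∑ i, y i 1
      = (N : ℝ)⁻¹ * ∑ i, (1 - (1 - β * p) ^ (∑ j, A i j)) * (y i 0 - y i 1) :=
  aronow_samii_bias_c10_general μ N A hAsymm hAdiag hA01 β p hβ1 hp0 hp1 Z hZmeas hZ01 hZp Atil
    hmeas hsymm hdiag h01 htrue hindep y
end

section
/- Under the four-level exposure model with noisy network observation and i.i.d. Bernoulli(p) treatment with 0 < p < 1, the Aronow–Samii estimator computed from the noisy network satisfies the exact bias identity E[ ȳ̃_{A&S}(c_{00}) ] − (1/N) Σ_{i=1}^N y_i(c_{00}) = (1/N) Σ_{i=1}^N [ 1 − (1 − βp)^{d_i} ] ( y_i(c_{01}) − y_i(c_{00}) ). -/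
/-!
Fix a vertex `i`. On the event that its observed exposure is `c₀₀`, the inverse probability
weight `1 / p̃_i(c₀₀) = (1 - p)^{-(d̃_i + 1)}` and the event's indicator combine into a product
`∏_j w_j` with `w_i = 1 - Z_i` and `w_j = (1 - p)^{-Ã_ij} (1 - Z_j Ã_ij)` for `j ≠ i`, while the
indicator of "no treated true neighbour" is `∏_j (1 - Z_j A_ij)`. The `j`-th factors depend only
on `(Z_j, Ã_ij)`, and for different `j` these pairs are built from disjoint sets of the
independent variables, so the expectation of the products factorises. Since
`E[w_j] = 1` whatever the law of `Ã_ij`, and `E[w_j (1 - Z_j)] = (1 - p) β + (1 - β) = 1 - βp`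
when `A_ij = 1`, the estimate at `i` has expectation
`y_i(c₀₁) + (1 - βp)^{d_i} (y_i(c₀₀) - y_i(c₀₁))`.
-/

open MeasureTheory ProbabilityTheory

namespace MeasureTheory

variable {Ω β : Type*} [MeasurableSpace Ω] {μ : Measure Ω}

lemma integral_comp_eq_sum_of_forall_mem [IsFiniteMeasure μ] [MeasurableSpace β]
    [MeasurableSingletonClass β] {X : Ω → β} (hX : Measurable X) (s : Finset β)
    (hs : ∀ ω, X ω ∈ s) (g : β → ℝ) :
    ∫ ω, g (X ω) ∂μ = ∑ b ∈ s, μ.real (X ⁻¹' {b}) * g b := by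
  have hsplit : ∀ ω, g (X ω) = ∑ b ∈ s, (X ⁻¹' {b}).indicator (fun _ => g b) ω := by
    intro ω
    rw [Finset.sum_eq_single_of_mem (X ω) (hs ω) fun b _ hb => by simp [Ne.symm hb]]
    simp
  simp_rw [hsplit]
  rw [integral_finsetSum _ fun b _ =>
    (integrable_const _).indicator (hX (measurableSet_singleton b))]
  exact Finset.sum_congr rfl fun b _ => integral_indicator_const _ (hX (measurableSet_singleton b))

lemma integrable_comp_of_forall_mem [IsFiniteMeasure μ] [MeasurableSpace β] {X : Ω → β}
    (hX : Measurable X) {g : β → ℝ} (hg : Measurable g) (s : Finset β) (hs : ∀ ω, X ω ∈ s) :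
    Integrable (fun ω => g (X ω)) μ :=
  Integrable.of_bound (hg.comp hX).aestronglyMeasurable (∑ b ∈ s, |g b|) <| ae_of_all _ fun ω =>
    Finset.single_le_sum (f := fun b => |g b|) (fun _ _ => abs_nonneg _) (hs ω)

variable [IsProbabilityMeasure μ] {X : Ω → ℕ} {p : ℝ}

lemma measureReal_preimage_zero_of_zero_one (hX : Measurable X)
    (h01 : ∀ ω, X ω = 0 ∨ X ω = 1) : μ.real (X ⁻¹' {0}) = 1 - μ.real (X ⁻¹' {1}) := by
  have hcompl : X ⁻¹' {0} = (X ⁻¹' {1})ᶜ := by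
    ext ω
    rcases h01 ω with h | h <;> simp [h]
  rw [hcompl, probReal_compl_eq_one_sub (hX (measurableSet_singleton 1))]

lemma integral_comp_of_zero_one (hX : Measurable X) (h01 : ∀ ω, X ω = 0 ∨ X ω = 1)
    (hp : μ.real (X ⁻¹' {1}) = p) (g : ℕ → ℝ) :
    ∫ ω, g (X ω) ∂μ = (1 - p) * g 0 + p * g 1 := by
  rw [integral_comp_eq_sum_of_forall_mem hX {0, 1}
      (fun ω => by rcases h01 ω with h | h <;> simp [h]),
    Finset.sum_pair zero_ne_one, measureReal_preimage_zero_of_zero_one hX h01, hp]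

end MeasureTheory

namespace ProbabilityTheory

variable {Ω : Type*} [MeasurableSpace Ω] {μ : Measure Ω}

lemma IndepFun.integral_comp₂_of_zero_one [IsProbabilityMeasure μ] {X Y : Ω → ℕ}
    (hXY : IndepFun X Y μ) (hX : Measurable X) (hY : Measurable Y) (hX01 : ∀ ω, X ω = 0 ∨ X ω = 1)
    (hY01 : ∀ ω, Y ω = 0 ∨ Y ω = 1) {p q : ℝ} (hp : μ.real (X ⁻¹' {1}) = p)
    (hq : μ.real (Y ⁻¹' {1}) = q) (f : ℕ → ℕ → ℝ) :
    ∫ ω, f (X ω) (Y ω) ∂μ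
      = (1 - p) * (1 - q) * f 0 0 + (1 - p) * q * f 0 1 + p * (1 - q) * f 1 0 + p * q * f 1 1 := by
  have hmem : ∀ ω, (X ω, Y ω) ∈ ({0, 1} ×ˢ {0, 1} : Finset (ℕ × ℕ)) := fun ω => by
    rcases hX01 ω with h | h <;> rcases hY01 ω with h' | h' <;> simp [h, h']
  have hprod : ∀ b c : ℕ, μ.real ((fun ω => (X ω, Y ω)) ⁻¹' {(b, c)})
      = μ.real (X ⁻¹' {b}) * μ.real (Y ⁻¹' {c}) := fun b c => by
    rw [← Set.singleton_prod_singleton, Set.mk_preimage_prod, measureReal_def, measureReal_def,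
      measureReal_def, hXY.measure_inter_preimage_eq_mul _ _ (measurableSet_singleton b)
        (measurableSet_singleton c), ENNReal.toReal_mul]
  refine (integral_comp_eq_sum_of_forall_mem (hX.prodMk hY) _ hmem (Function.uncurry f)).trans ?_
  rw [Finset.sum_product, Finset.sum_pair zero_ne_one, Finset.sum_pair zero_ne_one,
    Finset.sum_pair zero_ne_one]
  simp only [hprod, measureReal_preimage_zero_of_zero_one hX hX01,
    measureReal_preimage_zero_of_zero_one hY hY01, hp, hq, Function.uncurry_apply_pair]
  ring

lemma iIndepFun.integral_finset_prod_of_pairwise_disjoint {ι κ β : Type*} [MeasurableSpace β]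
    {X : ι → Ω → β} (hX : iIndepFun X μ) (hXm : ∀ k, Measurable (X k)) {B : κ → Finset ι}
    (hB : Pairwise fun j l => Disjoint (B j) (B l)) {φ : (j : κ) → (B j → β) → ℝ}
    (hφ : ∀ j, Measurable (φ j)) (s : Finset κ) :
    ∫ ω, ∏ j ∈ s, φ j (fun k => X k ω) ∂μ = ∏ j ∈ s, ∫ ω, φ j (fun k => X k ω) ∂μ := by
  classical
  induction s using Finset.induction_on with
  | empty =>
    have := hX.isProbabilityMeasure
    simp
  | insert j s hj ih =>
    have hdisj : Disjoint (B j) (s.biUnion B) :=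
      (Finset.disjoint_biUnion_right _ _ _).2 fun l hl => hB (ne_of_mem_of_not_mem hl hj).symm
    let ψ : (s.biUnion B → β) → ℝ := fun v =>
      ∏ l ∈ s.attach, φ l (fun k => v ⟨k, Finset.mem_biUnion.2 ⟨l, l.2, k.2⟩⟩)
    have hψ : Measurable ψ := Finset.measurable_prod _ fun l _ =>
      (hφ l).comp (measurable_pi_lambda _ fun k => measurable_pi_apply _)
    have hrest : ∀ ω, ∏ l ∈ s, φ l (fun k => X k ω) = ψ (fun k => X k ω) := fun ω =>
      (Finset.prod_attach s fun l => φ l (fun k => X k ω)).symm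
    rw [Finset.prod_insert hj, ← ih]
    simp_rw [Finset.prod_insert hj, hrest]
    exact ((hX.indepFun_finset _ _ hdisj hXm).comp (hφ j) hψ).integral_fun_mul_eq_mul_integral
      ((hφ j).comp (measurable_pi_lambda _ fun k => hXm k)).aestronglyMeasurable
      (hψ.comp (measurable_pi_lambda _ fun k => hXm k)).aestronglyMeasurable

end ProbabilityTheory

lemma Finset.prod_one_sub_natCast_eq_ite {κ : Type*} {s : Finset κ} {x : κ → ℕ}
    (hx : ∀ j ∈ s, x j = 0 ∨ x j = 1) :
    ∏ j ∈ s, (1 - (x j : ℝ)) = if ∑ j ∈ s, x j = 0 then 1 else 0 := by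
  split_ifs with h
  · exact Finset.prod_eq_one fun j hj => by simp [Finset.sum_eq_zero_iff.1 h j hj]
  · obtain ⟨j, hj, hxj⟩ := Finset.exists_ne_zero_of_sum_ne_zero h
    exact Finset.prod_eq_zero hj (by simp [(hx j hj).resolve_left hxj])

namespace AronowSamii

variable {N : ℕ}

abbrev Coord (N : ℕ) := Fin N ⊕ {e : Fin N × Fin N // e.1 < e.2}

/-- For `j = i` this is the treatment coordinate of `i`, so that `block i i = {inl i}`. -/
def edgeCoord (i j : Fin N) : Coord N :=
  if h : i < j then .inr ⟨(i, j), h⟩ else if h' : j < i then .inr ⟨(j, i), h'⟩ else .inl i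

def otherEnd (i : Fin N) : Coord N → Fin N
  | .inl j => j
  | .inr e => if e.1.1 = i then e.1.2 else e.1.1

lemma otherEnd_edgeCoord (i j : Fin N) : otherEnd i (edgeCoord i j) = j := by
  unfold edgeCoord
  split_ifs with h h'
  · simp [otherEnd]
  · simp [otherEnd, h'.ne]
  · exact le_antisymm (not_lt.1 h') (not_lt.1 h)

lemma edgeCoord_ne_inl {i j : Fin N} (hji : j ≠ i) (k : Fin N) : edgeCoord i j ≠ .inl k := by
  unfold edgeCoord
  split_ifs with h h'
  · exact Sum.inr_ne_inl
  · exact Sum.inr_ne_inl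
  · exact absurd (le_antisymm (not_lt.1 h) (not_lt.1 h')) hji

lemma sumElim_edgeCoord {γ : Type*} (z : Fin N → γ) {w : Fin N → Fin N → γ}
    (hw : ∀ i j, w i j = w j i) {i j : Fin N} (hji : j ≠ i) :
    Sum.elim z (fun e : {e : Fin N × Fin N // e.1 < e.2} => w e.1.1 e.1.2) (edgeCoord i j)
      = w i j := by
  unfold edgeCoord
  split_ifs with h h'
  · rfl
  · exact hw j i
  · exact absurd (le_antisymm (not_lt.1 h) (not_lt.1 h')) hji

def block (i j : Fin N) : Finset (Coord N) := {.inl j, edgeCoord i j}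

lemma inl_mem_block (i j : Fin N) : .inl j ∈ block i j := Finset.mem_insert_self _ _

lemma edgeCoord_mem_block (i j : Fin N) : edgeCoord i j ∈ block i j :=
  Finset.mem_insert_of_mem (Finset.mem_singleton_self _)

lemma pairwise_disjoint_block (i : Fin N) :
    Pairwise fun j k => Disjoint (block i j) (block i k) := by
  have hend : ∀ {j x}, x ∈ block i j → otherEnd i x = j := by
    intro j x hx
    rcases Finset.mem_insert.1 hx with rfl | hx
    · rfl
    · rw [Finset.mem_singleton.1 hx, otherEnd_edgeCoord]
  exact fun j k hjk => Finset.disjoint_left.2 fun x hj hk => hjk ((hend hj).symm.trans (hend hk))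

/-- The factor `w_j` of the weighted indicator of the observed exposure `c₀₀` at vertex `i`,
as a function of `z = Z_j` and `a = Ã_ij`. -/
noncomputable def c00Weight (p : ℝ) (i j : Fin N) (z a : ℕ) : ℝ :=
  if j = i then 1 - z else ((1 - p) ^ a)⁻¹ * (1 - z * a)

/-- `ỹ_{A&S,i}(c₀₀)` for the treatments `z` and the rows `ã`, `a` of `Ã` and `A` at `i`. -/
noncomputable def c00Estimate (p : ℝ) (i : Fin N) (z ã a : Fin N → ℕ) (y : Fin 4 → ℝ) : ℝ :=
  (if 0 < (1 - p) ^ ((∑ j, ã j) + 1) then 1 else 0)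
    * (if z i = 0 ∧ (∑ j, z j * ã j) = 0 then 1 else 0)
    * ((1 - p) ^ ((∑ j, ã j) + 1))⁻¹
    * (if z i = 1 then (if 0 < ∑ j, z j * a j then y 0 else y 1)
        else (if 0 < ∑ j, z j * a j then y 2 else y 3))

lemma prod_c00Weight (p : ℝ) {i : Fin N} {z ã : Fin N → ℕ} (hz : ∀ j, z j = 0 ∨ z j = 1)
    (hã : ∀ j, ã j = 0 ∨ ã j = 1) (hãi : ã i = 0) :
    ∏ j, c00Weight p i j (z j) (ã j)
      = (if z i = 0 ∧ ∑ j, z j * ã j = 0 then 1 else 0) * ((1 - p) ^ ∑ j, ã j)⁻¹ := by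
  have hsplit : ∀ j, c00Weight p i j (z j) (ã j) = (if i = j then 1 - (z j : ℝ) else 1)
      * ((1 - ((z j * ã j : ℕ) : ℝ)) * ((1 - p) ^ ã j)⁻¹) := by
    intro j
    by_cases hj : j = i
    · subst hj
      simp [c00Weight, hãi]
    · simp [c00Weight, hj, Ne.symm hj, mul_comm]
  have hzã : ∀ j ∈ Finset.univ, z j * ã j = 0 ∨ z j * ã j = 1 := fun j _ => by
    rcases hz j with h | h <;> rcases hã j with h' | h' <;> simp [h, h']
  rw [Finset.prod_congr rfl fun j _ => hsplit j, Finset.prod_mul_distrib, Finset.prod_ite_eq,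
    Finset.prod_mul_distrib, Finset.prod_one_sub_natCast_eq_ite hzã, Finset.prod_inv_distrib,
    Finset.prod_pow_eq_pow_sum, if_pos (Finset.mem_univ i), ← mul_assoc]
  congr 1
  rcases hz i with h | h <;> simp [h]

lemma c00Estimate_eq {p : ℝ} (hp : p < 1) {i : Fin N} {z ã a : Fin N → ℕ}
    (hz : ∀ j, z j = 0 ∨ z j = 1) (hã : ∀ j, ã j = 0 ∨ ã j = 1) (hãi : ã i = 0)
    (ha : ∀ j, a j = 0 ∨ a j = 1) (y : Fin 4 → ℝ) :
    c00Estimate p i z ã a y = (1 - p)⁻¹ * (y 2 * ∏ j, c00Weight p i j (z j) (ã j)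
      + (y 3 - y 2) * ∏ j, c00Weight p i j (z j) (ã j) * (1 - z j * a j)) := by
  have hza : ∀ j ∈ Finset.univ, z j * a j = 0 ∨ z j * a j = 1 := fun j _ => by
    rcases hz j with h | h <;> rcases ha j with h' | h' <;> simp [h, h']
  have htrue : ∏ j, (1 - (z j : ℝ) * a j) = if ∑ j, z j * a j = 0 then 1 else 0 := by
    simpa using Finset.prod_one_sub_natCast_eq_ite hza
  rw [c00Estimate, Finset.prod_mul_distrib, htrue, prod_c00Weight p hz hã hãi,
    if_pos (pow_pos (sub_pos.2 hp) _), one_mul]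
  split_ifs <;> simp_all [pow_succ] <;> ring

variable {Ω : Type*} [MeasurableSpace Ω] {μ : Measure Ω} {p β : ℝ}

lemma integral_c00Weight_mul_of_ne [IsProbabilityMeasure μ] (hp : p ≠ 1) {i j : Fin N}
    (hji : j ≠ i) {Z T : Ω → ℕ} (hZT : IndepFun Z T μ) (hZ : Measurable Z) (hT : Measurable T)
    (hZ01 : ∀ ω, Z ω = 0 ∨ Z ω = 1) (hT01 : ∀ ω, T ω = 0 ∨ T ω = 1)
    (hZp : μ.real (Z ⁻¹' {1}) = p) {a : ℕ} (ha : a = 0 ∨ a = 1)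
    (hTq : a = 1 → μ.real (T ⁻¹' {1}) = 1 - β) :
    ∫ ω, c00Weight p i j (Z ω) (T ω) * (1 - Z ω * a) ∂μ = (1 - β * p) ^ a := by
  have hp' : 1 - p ≠ 0 := sub_ne_zero.2 (Ne.symm hp)
  rw [hZT.integral_comp₂_of_zero_one hZ hT hZ01 hT01 hZp rfl
    (fun z t => c00Weight p i j z t * (1 - z * a))]
  rcases ha with rfl | rfl
  · simp [c00Weight, hji]
    field_simp
    ring
  · simp [c00Weight, hji, hTq rfl]
    field_simp
    ring

variable {Z : Fin N → Ω → ℕ} {Atil : Fin N → Fin N → Ω → ℕ}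

lemma integral_prod_row_eq_prod_integral
    (hindep : iIndepFun
      (Sum.elim Z (fun e : {e : Fin N × Fin N // e.1 < e.2} => Atil e.1.1 e.1.2)) μ)
    (hZ : ∀ j, Measurable (Z j)) (hAtil : ∀ i j, Measurable (Atil i j))
    (hsymm : ∀ i j, Atil i j = Atil j i) {i : Fin N} {f : Fin N → ℕ → ℕ → ℝ}
    (hfi : ∀ z a, f i z a = f i z 0) :
    ∫ ω, ∏ j, f j (Z j ω) (Atil i j ω) ∂μ = ∏ j, ∫ ω, f j (Z j ω) (Atil i j ω) ∂μ := by
  set X := Sum.elim Z (fun e : {e : Fin N × Fin N // e.1 < e.2} => Atil e.1.1 e.1.2)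
  have hXm : ∀ k, Measurable (X k) := by
    rintro (j | e)
    exacts [hZ j, hAtil _ _]
  have hblock : ∀ j ω, f j (X (.inl j) ω) (X (edgeCoord i j) ω) = f j (Z j ω) (Atil i j ω) := by
    intro j ω
    by_cases hji : j = i
    · subst hji
      rw [hfi, hfi (Z j ω)]
      rfl
    · simp [X, sumElim_edgeCoord Z hsymm hji]
  simp_rw [← hblock]
  exact hindep.integral_finset_prod_of_pairwise_disjoint hXm (pairwise_disjoint_block i)
    (φ := fun j v =>
      f j (v ⟨.inl j, inl_mem_block i j⟩) (v ⟨edgeCoord i j, edgeCoord_mem_block i j⟩))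
    (fun _ => measurable_of_countable _) _

lemma integral_prod_c00Weight_mul [IsProbabilityMeasure μ] (hp : p ≠ 1)
    (hindep : iIndepFun
      (Sum.elim Z (fun e : {e : Fin N × Fin N // e.1 < e.2} => Atil e.1.1 e.1.2)) μ)
    (hZ : ∀ j, Measurable (Z j)) (hAtil : ∀ i j, Measurable (Atil i j))
    (hZ01 : ∀ j ω, Z j ω = 0 ∨ Z j ω = 1) (hAtil01 : ∀ i j ω, Atil i j ω = 0 ∨ Atil i j ω = 1)
    (hsymm : ∀ i j, Atil i j = Atil j i) (hZp : ∀ j, μ.real (Z j ⁻¹' {1}) = p)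
    {i : Fin N} {a : Fin N → ℕ} (ha : ∀ j, a j = 0 ∨ a j = 1) (hai : a i = 0)
    (hq : ∀ j, a j = 1 → μ.real (Atil i j ⁻¹' {1}) = 1 - β) :
    ∫ ω, ∏ j, c00Weight p i j (Z j ω) (Atil i j ω) * (1 - Z j ω * a j) ∂μ
      = (1 - p) * (1 - β * p) ^ ∑ j, a j := by
  have hfactor : ∀ j, ∫ ω, c00Weight p i j (Z j ω) (Atil i j ω) * (1 - Z j ω * a j) ∂μ
      = (if i = j then 1 - p else 1) * (1 - β * p) ^ a j := by
    intro j
    by_cases hji : j = i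
    · subst hji
      simpa [c00Weight, hai] using integral_comp_of_zero_one (hZ j) (hZ01 j) (hZp j)
        (fun z => 1 - (z : ℝ))
    · have hind : IndepFun (Z j) (Atil i j) μ := by
        simpa [sumElim_edgeCoord Z hsymm hji] using hindep.indepFun (edgeCoord_ne_inl hji j).symm
      rw [if_neg (Ne.symm hji), one_mul]
      exact integral_c00Weight_mul_of_ne hp hji hind (hZ j) (hAtil i j) (hZ01 j) (hAtil01 i j)
        (hZp j) (ha j) (hq j)
  rw [integral_prod_row_eq_prod_integral (f := fun j z t => c00Weight p i j z t * (1 - z * a j))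
      hindep hZ hAtil hsymm (by simp [c00Weight, hai]),
    Finset.prod_congr rfl fun j _ => hfactor j, Finset.prod_mul_distrib, Finset.prod_ite_eq,
    Finset.prod_pow_eq_pow_sum, if_pos (Finset.mem_univ i)]

lemma integrable_comp_row [IsFiniteMeasure μ] (hZ : ∀ j, Measurable (Z j))
    (hAtil : ∀ i j, Measurable (Atil i j)) (hZ01 : ∀ j ω, Z j ω = 0 ∨ Z j ω = 1)
    (hAtil01 : ∀ i j ω, Atil i j ω = 0 ∨ Atil i j ω = 1)
    (i : Fin N) (g : (Fin N → ℕ × ℕ) → ℝ) :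
    Integrable (fun ω => g fun j => (Z j ω, Atil i j ω)) μ :=
  integrable_comp_of_forall_mem (measurable_pi_lambda _ fun j => (hZ j).prodMk (hAtil i j))
    (measurable_of_countable g) (Fintype.piFinset fun _ => {0, 1} ×ˢ {0, 1})
    fun ω => Fintype.mem_piFinset.2 fun j => by
      rcases hZ01 j ω with h | h <;> rcases hAtil01 i j ω with h' | h' <;> simp [h, h']

lemma integral_c00Estimate [IsProbabilityMeasure μ] (hp : p < 1)
    (hindep : iIndepFun
      (Sum.elim Z (fun e : {e : Fin N × Fin N // e.1 < e.2} => Atil e.1.1 e.1.2)) μ)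
    (hZ : ∀ j, Measurable (Z j)) (hAtil : ∀ i j, Measurable (Atil i j))
    (hZ01 : ∀ j ω, Z j ω = 0 ∨ Z j ω = 1) (hAtil01 : ∀ i j ω, Atil i j ω = 0 ∨ Atil i j ω = 1)
    (hsymm : ∀ i j, Atil i j = Atil j i) (hdiag : ∀ i ω, Atil i i ω = 0)
    (hZp : ∀ j, μ.real (Z j ⁻¹' {1}) = p)
    {i : Fin N} {a : Fin N → ℕ} (ha : ∀ j, a j = 0 ∨ a j = 1) (hai : a i = 0)
    (hq : ∀ j, a j = 1 → μ.real (Atil i j ⁻¹' {1}) = 1 - β) (y : Fin 4 → ℝ) :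
    ∫ ω, c00Estimate p i (Z · ω) (Atil i · ω) a y ∂μ
      = y 2 + (y 3 - y 2) * (1 - β * p) ^ ∑ j, a j := by
  have hI₀ : Integrable (fun ω => ∏ j, c00Weight p i j (Z j ω) (Atil i j ω)) μ :=
    integrable_comp_row hZ hAtil hZ01 hAtil01 i fun v => ∏ j, c00Weight p i j (v j).1 (v j).2
  have hIa : Integrable
      (fun ω => ∏ j, c00Weight p i j (Z j ω) (Atil i j ω) * (1 - Z j ω * a j)) μ :=
    integrable_comp_row hZ hAtil hZ01 hAtil01 i
      fun v => ∏ j, c00Weight p i j (v j).1 (v j).2 * (1 - (v j).1 * a j)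
  have hE₀ : ∫ ω, ∏ j, c00Weight p i j (Z j ω) (Atil i j ω) ∂μ = 1 - p := by
    simpa using integral_prod_c00Weight_mul (a := 0) (β := β) hp.ne hindep hZ hAtil hZ01
      hAtil01 hsymm hZp (by simp) rfl (by simp)
  simp_rw [c00Estimate_eq hp (hZ01 · _) (hAtil01 i · _) (hdiag i _) ha]
  rw [integral_const_mul, integral_add (hI₀.const_mul _) (hIa.const_mul _), integral_const_mul,
    integral_const_mul, hE₀,
    integral_prod_c00Weight_mul hp.ne hindep hZ hAtil hZ01 hAtil01 hsymm hZp ha hai hq]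
  field_simp [sub_ne_zero.2 hp.ne']

end AronowSamii

open AronowSamii

theorem aronow_samii_bias_c00_general
    {Ω : Type} [MeasurableSpace Ω] (μ : Measure Ω) [IsProbabilityMeasure μ]
    (N : ℕ)
    (A : Fin N → Fin N → ℕ)
    (hAsymm : ∀ i j, A i j = A j i)
    (hAdiag : ∀ i, A i i = 0)
    (hA01 : ∀ i j, A i j = 0 ∨ A i j = 1)
    (β p : ℝ) (hβ1 : β ≤ 1)
    (hp0 : 0 < p) (hp1 : p < 1)
    (Z : Fin N → Ω → ℕ)
    (hZmeas : ∀ i, Measurable (Z i))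
    (hZ01 : ∀ i ω, Z i ω = 0 ∨ Z i ω = 1)
    (hZp : ∀ i, μ {ω | Z i ω = 1} = ENNReal.ofReal p)
    (Atil : Fin N → Fin N → Ω → ℕ)
    (hmeas : ∀ i j, Measurable (Atil i j))
    (hsymm : ∀ i j ω, Atil i j ω = Atil j i ω)
    (hdiag : ∀ i ω, Atil i i ω = 0)
    (h01 : ∀ i j ω, Atil i j ω = 0 ∨ Atil i j ω = 1)
    (htrue : ∀ i j : Fin N, i < j → A i j = 1 →
      μ {ω | Atil i j ω = 1} = ENNReal.ofReal (1 - β))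
    (hindep : iIndepFun
      (Sum.elim Z (fun e : {e : Fin N × Fin N // e.1 < e.2} => Atil e.1.1 e.1.2)) μ)
    -- fixed potential outcomes, indexed 0 ↦ c_11, 1 ↦ c_10, 2 ↦ c_01, 3 ↦ c_00
    (y : Fin N → Fin 4 → ℝ) :
    (∫ ω, (N : ℝ)⁻¹ * ∑ i,
        -- ỹ_{A&S,i}(c_00): indicator of positive observed exposure probability,
        -- times indicator of observed exposure c_00, divided by p̃_i(c_00),
        -- times the outcome at the true exposure
        ((if 0 < (1 - p) ^ ((∑ j, Atil i j ω) + 1) then (1:ℝ) else 0)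
          * (if Z i ω = 0 ∧ (∑ j, Z j ω * Atil i j ω) = 0 then (1:ℝ) else 0)
          * ((1 - p) ^ ((∑ j, Atil i j ω) + 1))⁻¹
          * (if Z i ω = 1 then
              (if 0 < ∑ j, Z j ω * A i j then y i 0 else y i 1)
             else
              (if 0 < ∑ j, Z j ω * A i j then y i 2 else y i 3))) ∂μ)
      - (N : ℝ)⁻¹ * ∑ i, y i 3
      = (N : ℝ)⁻¹ * ∑ i, (1 - (1 - β * p) ^ (∑ j, A i j)) * (y i 2 - y i 3) := by
  have hsymm' : ∀ i j, Atil i j = Atil j i := fun i j => funext (hsymm i j)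
  have hZp' : ∀ j, μ.real (Z j ⁻¹' {1}) = p := fun j => by
    rw [measureReal_def, ← ENNReal.toReal_ofReal hp0.le, ← hZp j]
    rfl
  have hedge : ∀ i j, A i j = 1 → μ.real (Atil i j ⁻¹' {1}) = 1 - β := by
    intro i j hA
    rcases lt_trichotomy i j with h | rfl | h
    · simp [measureReal_def, Set.preimage, htrue i j h hA, hβ1]
    · exact absurd hA (by simp [hAdiag])
    · simp [measureReal_def, Set.preimage, hsymm' i j, htrue j i h (hAsymm j i ▸ hA), hβ1]
  change (∫ ω, (N : ℝ)⁻¹ * ∑ i, c00Estimate p i (Z · ω) (Atil i · ω) (A i) (y i) ∂μ) - _ = _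
  rw [integral_const_mul, integral_finsetSum _ fun i _ =>
      integrable_comp_row hZmeas hmeas hZ01 h01 i fun v =>
        c00Estimate p i (fun j => (v j).1) (fun j => (v j).2) (A i) (y i),
    Finset.sum_congr rfl fun i _ => integral_c00Estimate hp1 hindep hZmeas hmeas hZ01 h01 hsymm'
      hdiag hZp' (hA01 i) (hAdiag i) (hedge i) (y i),
    ← mul_sub, ← Finset.sum_sub_distrib]
  exact congrArg _ (Finset.sum_congr rfl fun i _ => by ring)

/-- Exact bias identity for the Aronow–Samii estimator of `ȳ(c_00)`
computed from the noisy network, under the four-level exposure model and i.i.d.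
Bernoulli(p) treatment with 0 < p < 1. Outcomes are indexed by
0 ↦ c_11, 1 ↦ c_10, 2 ↦ c_01, 3 ↦ c_00. -/
theorem aronow_samii_bias_c00
    {Ω : Type} [MeasurableSpace Ω] (μ : Measure Ω) [IsProbabilityMeasure μ]
    (N : ℕ)
    (A : Fin N → Fin N → ℕ)
    (hAsymm : ∀ i j, A i j = A j i)
    (hAdiag : ∀ i, A i i = 0)
    (hA01 : ∀ i j, A i j = 0 ∨ A i j = 1)
    (α β p : ℝ) (hα0 : 0 ≤ α) (hα1 : α ≤ 1) (hβ0 : 0 ≤ β) (hβ1 : β ≤ 1)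
    (hp0 : 0 < p) (hp1 : p < 1)
    (Z : Fin N → Ω → ℕ)
    (hZmeas : ∀ i, Measurable (Z i))
    (hZ01 : ∀ i ω, Z i ω = 0 ∨ Z i ω = 1)
    (hZp : ∀ i, μ {ω | Z i ω = 1} = ENNReal.ofReal p)
    (Atil : Fin N → Fin N → Ω → ℕ)
    (hmeas : ∀ i j, Measurable (Atil i j))
    (hsymm : ∀ i j ω, Atil i j ω = Atil j i ω)
    (hdiag : ∀ i ω, Atil i i ω = 0)
    (h01 : ∀ i j ω, Atil i j ω = 0 ∨ Atil i j ω = 1)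
    (hfalse : ∀ i j : Fin N, i < j → A i j = 0 →
      μ {ω | Atil i j ω = 1} = ENNReal.ofReal α)
    (htrue : ∀ i j : Fin N, i < j → A i j = 1 →
      μ {ω | Atil i j ω = 1} = ENNReal.ofReal (1 - β))
    (hindep : iIndepFun
      (Sum.elim Z (fun e : {e : Fin N × Fin N // e.1 < e.2} => Atil e.1.1 e.1.2)) μ)
    -- fixed potential outcomes, indexed 0 ↦ c_11, 1 ↦ c_10, 2 ↦ c_01, 3 ↦ c_00
    (y : Fin N → Fin 4 → ℝ) :
    (∫ ω, (N : ℝ)⁻¹ * ∑ i,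
        -- ỹ_{A&S,i}(c_00): indicator of positive observed exposure probability,
        -- times indicator of observed exposure c_00, divided by p̃_i(c_00),
        -- times the outcome at the true exposure
        ((if 0 < (1 - p) ^ ((∑ j, Atil i j ω) + 1) then (1:ℝ) else 0)
          * (if Z i ω = 0 ∧ (∑ j, Z j ω * Atil i j ω) = 0 then (1:ℝ) else 0)
          * ((1 - p) ^ ((∑ j, Atil i j ω) + 1))⁻¹
          * (if Z i ω = 1 then
              (if 0 < ∑ j, Z j ω * A i j then y i 0 else y i 1)
             else
              (if 0 < ∑ j, Z j ω * A i j then y i 2 else y i 3))) ∂μ)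
      - (N : ℝ)⁻¹ * ∑ i, y i 3
      = (N : ℝ)⁻¹ * ∑ i, (1 - (1 - β * p) ^ (∑ j, A i j)) * (y i 2 - y i 3) :=
  aronow_samii_bias_c00_general μ N A hAsymm hAdiag hA01 β p hβ1 hp0 hp1 Z hZmeas hZ01 hZp Atil
    hmeas hsymm hdiag h01 htrue hindep y
end

section
/- Let G be a simple undirected graph on N vertices with edge density δ = 2|E|/(N(N−1)), and let Ã, Ã_*, Ã_{**} be three i.i.d. noisy observations of G with error rates α (false edges) and β (missed edges), entries independent across vertex pairs. Define û_1 = (2/(N(N−1))) Σ_{i<j} Ã_{ij}, û_2 = (1/(N(N−1))) Σ_{i<j} |Ã_{ij,*} − Ã_{ij}|, and û_3 = (2/(3N(N−1))) Σ_{i<j} I{exactly one of Ã_{ij,**}, Ã_{ij,*}, Ã_{ij} equals 1}. Then E[û_1] = (1−δ)α + δ(1−β), E[û_2] = (1−δ)α(1−α) + δβ(1−β), and E[û_3] = (1−δ)α(1−α)² + δβ²(1−β). -/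
/-!
For a pair `i < j` the replicate entries are independent Bernoulli variables with the same
parameter `p`, namely `α` or `1 - β` according to `A i j`. Each `ûₖ` is `1/k` times the average
over pairs of the indicator that exactly one of the first `k` replicates equals `1`. That event
has probability `k p (1 - p)^(k - 1)`, which is affine in `A i j ∈ {0, 1}`, so averaging over the
pairs gives
`(1 - δ) α (1 - α)^(k - 1) + δ (1 - β) β^(k - 1)`.
-/

open MeasureTheory ProbabilityTheory Filter
open Function Finset

theorem Fintype.prod_ite_eq_mul_pow_card_sub_one {ι M : Type*} [Fintype ι] [DecidableEq ι]
    [CommMonoid M] (k : ι) (a b : M) :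
    ∏ i, (if i = k then a else b) = a * b ^ (Fintype.card ι - 1) := by
  rw [← mul_prod_erase univ _ (mem_univ k), if_pos rfl,
    Finset.prod_congr rfl fun i hi => if_neg (ne_of_mem_erase hi), prod_const,
    card_erase_of_mem (mem_univ k), card_univ]

theorem ProbabilityTheory.iIndepFun.measureReal_existsUnique_mem
    {Ω ι β : Type*} [MeasurableSpace Ω] {μ : Measure Ω} [IsProbabilityMeasure μ]
    [Fintype ι] [MeasurableSpace β] {X : ι → Ω → β} (hX : iIndepFun X μ)
    (hXm : ∀ i, Measurable (X i)) {s : Set β} (hs : MeasurableSet s) {p : ℝ}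
    (hp : ∀ i, μ.real (X i ⁻¹' s) = p) :
    μ.real {ω | ∃! i, X i ω ∈ s} = Fintype.card ι * (p * (1 - p) ^ (Fintype.card ι - 1)) := by
  classical
  let T : ι → ι → Set β := fun k i => if i = k then s else sᶜ
  have hT : ∀ k i, MeasurableSet (T k i) := fun k i => by
    dsimp only [T]
    split_ifs
    exacts [hs, hs.compl]
  have hunion : {ω | ∃! i, X i ω ∈ s} = ⋃ k, ⋂ i, X i ⁻¹' T k i := by
    ext ω
    simp only [Set.mem_ofPred_eq, Set.mem_iUnion, Set.mem_iInter, Set.mem_preimage, T]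
    refine exists_congr fun k => ⟨fun h i => ?_, fun h => ⟨by simpa using h k, fun i hi => ?_⟩⟩
    · split_ifs with hik
      exacts [hik ▸ h.1, fun hi => hik (h.2 i hi)]
    · by_contra hik
      exact absurd hi (by simpa [hik] using h i)
  have hdisj : Pairwise (Disjoint on fun k => ⋂ i, X i ⁻¹' T k i) := by
    intro k l hkl
    refine Set.disjoint_left.mpr fun ω hk hl => ?_
    simp only [Set.mem_iInter, Set.mem_preimage, T] at hk hl
    exact absurd (by simpa using hk k) (by simpa [hkl] using hl k)
  have hpiece : ∀ k, μ.real (⋂ i, X i ⁻¹' T k i) = p * (1 - p) ^ (Fintype.card ι - 1) := by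
    intro k
    rw [measureReal_def, hX.meas_iInter fun i => ⟨T k i, hT k i, rfl⟩,
      ENNReal.toReal_prod, ← Fintype.prod_ite_eq_mul_pow_card_sub_one k]
    refine prod_congr rfl fun i _ => ?_
    rw [← measureReal_def]
    dsimp only [T]
    split_ifs
    · exact hp i
    · rw [Set.preimage_compl, probReal_compl_eq_one_sub (hXm i hs), hp i]
  rw [hunion, measureReal_iUnion_fintype hdisj
    (fun k => MeasurableSet.iInter fun i => hXm i (hT k i))]
  simp [hpiece]

theorem Fintype.sum_sum_eq_two_nsmul_sum_filter_lt {ι M : Type*} [Fintype ι] [LinearOrder ι]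
    [AddCommMonoid M] (f : ι → ι → M) (hsymm : ∀ i j, f i j = f j i) (hdiag : ∀ i, f i i = 0) :
    ∑ i, ∑ j, f i j = 2 • ∑ e ∈ univ.filter (fun e : ι × ι => e.1 < e.2), f e.1 e.2 := by
  have hsplit : ∀ e : ι × ι,
      f e.1 e.2 = (if e.1 < e.2 then f e.1 e.2 else 0) + (if e.2 < e.1 then f e.1 e.2 else 0) := by
    rintro ⟨i, j⟩
    rcases lt_trichotomy i j with h | rfl | h
    · simp [h, h.not_gt]
    · simp [hdiag]
    · simp [h, h.not_gt]
  have hswap : ∑ e : ι × ι, (if e.2 < e.1 then f e.1 e.2 else 0)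
      = ∑ e : ι × ι, (if e.1 < e.2 then f e.1 e.2 else 0) :=
    Fintype.sum_equiv (Equiv.prodComm ι ι) _ _ fun e => by
      simp only [Equiv.prodComm_apply, Prod.fst_swap, Prod.snd_swap, hsymm e.1 e.2]
      congr
  rw [← Fintype.sum_prod_type', Fintype.sum_congr _ _ hsplit, sum_add_distrib, hswap, two_nsmul,
    sum_filter]

noncomputable def edgeDensity {ι : Type*} [Fintype ι] (A : ι → ι → ℕ) : ℝ :=
  (∑ i, ∑ j, (A i j : ℝ)) / (Fintype.card ι * (Fintype.card ι - 1))

theorem two_div_mul_sum_filter_lt_eq_edgeDensity {ι : Type*} [Fintype ι] [LinearOrder ι]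
    (hn : 2 ≤ Fintype.card ι) {A : ι → ι → ℕ} (hsymm : ∀ i j, A i j = A j i)
    (hdiag : ∀ i, A i i = 0) (h01 : ∀ i j, A i j = 0 ∨ A i j = 1) (g : ℕ → ℝ) :
    2 / (Fintype.card ι * (Fintype.card ι - 1 : ℝ))
        * ∑ e ∈ univ.filter (fun e : ι × ι => e.1 < e.2), g (A e.1 e.2)
      = (1 - edgeDensity A) * g 0 + edgeDensity A * g 1 := by
  have hlin : ∀ i j, g (A i j) = g 0 + A i j * (g 1 - g 0) := fun i j => by
    rcases h01 i j with h | h <;> simp [h]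
  have hcard : (#(univ.filter fun e : ι × ι => e.1 < e.2) : ℝ)
      = Fintype.card ι * (Fintype.card ι - 1) / 2 := by
    rw [Fintype.card_product_filter_lt, Nat.cast_choose_two]
  have hedges : ∑ i, ∑ j, (A i j : ℝ)
      = 2 * ∑ e ∈ univ.filter (fun e : ι × ι => e.1 < e.2), (A e.1 e.2 : ℝ) := by
    rw [Fintype.sum_sum_eq_two_nsmul_sum_filter_lt _ (fun i j => by rw [hsymm])
      (fun i => by simp [hdiag]), two_nsmul, two_mul]
  have hn' : (2 : ℝ) ≤ Fintype.card ι := by exact_mod_cast hn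
  have hn0 : (Fintype.card ι : ℝ) ≠ 0 := by positivity
  have hn1 : (Fintype.card ι - 1 : ℝ) ≠ 0 := by linarith
  simp only [hlin, sum_add_distrib, ← sum_mul, sum_const, nsmul_eq_mul, hcard, edgeDensity, hedges]
  field_simp
  ring

section NoisyObservations

variable {Ω ι : Type*} [MeasurableSpace Ω] {μ : Measure Ω} [IsProbabilityMeasure μ]
  [LinearOrder ι] {m : ℕ} {B : Fin m → ι → ι → Ω → ℕ}

/-- The paper's `ûₖ` for `k = 1, 2, 3`: for 0/1 entries, `Ã_{ij}` in `û₁` and `|Ã_{ij,*} − Ã_{ij}|`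
in `û₂` are the indicators that exactly one of the first `k` observations equals `1`. -/
noncomputable def replicateStatistic [Fintype ι] (B : Fin m → ι → ι → Ω → ℕ) (k : ℕ)
    (hk : k ≤ m) (ω : Ω) : ℝ :=
  2 / (k * (Fintype.card ι * (Fintype.card ι - 1)))
    * ∑ e ∈ univ.filter (fun e : ι × ι => e.1 < e.2),
        {ω | ∃! t : Fin k, B (Fin.castLE hk t) e.1 e.2 ω = 1}.indicator 1 ω

theorem measureReal_existsUnique_castLE_eq_one (hmeas : ∀ t i j, Measurable (B t i j))
    (hindep : iIndepFun (fun et : {e : ι × ι // e.1 < e.2} × Fin m =>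
      B et.2 et.1.1.1 et.1.1.2) μ)
    {e : ι × ι} (he : e.1 < e.2) {p : ℝ} (hp : ∀ t, μ.real {ω | B t e.1 e.2 ω = 1} = p)
    {k : ℕ} (hk : k ≤ m) :
    μ.real {ω | ∃! t : Fin k, B (Fin.castLE hk t) e.1 e.2 ω = 1}
      = k * (p * (1 - p) ^ (k - 1)) := by
  have hsub : iIndepFun (fun t : Fin k => B (Fin.castLE hk t) e.1 e.2) μ :=
    hindep.precomp (g := fun t => (⟨e, he⟩, Fin.castLE hk t))
      fun s t hst => Fin.castLE_injective hk (congrArg Prod.snd hst)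
  simpa using hsub.measureReal_existsUnique_mem (fun t => hmeas _ _ _)
    (measurableSet_singleton 1) (fun t => hp _)

theorem integral_replicateStatistic [Fintype ι] (hmeas : ∀ t i j, Measurable (B t i j))
    (hindep : iIndepFun (fun et : {e : ι × ι // e.1 < e.2} × Fin m =>
      B et.2 et.1.1.1 et.1.1.2) μ)
    (hn : 2 ≤ Fintype.card ι) {A : ι → ι → ℕ} (hsymm : ∀ i j, A i j = A j i)
    (hdiag : ∀ i, A i i = 0) (h01 : ∀ i j, A i j = 0 ∨ A i j = 1) {α β : ℝ}
    (hp : ∀ t, ∀ e : ι × ι, e.1 < e.2 →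
      μ.real {ω | B t e.1 e.2 ω = 1} = if A e.1 e.2 = 1 then 1 - β else α)
    {k : ℕ} (hk0 : k ≠ 0) (hk : k ≤ m) :
    ∫ ω, replicateStatistic B k hk ω ∂μ
      = (1 - edgeDensity A) * (α * (1 - α) ^ (k - 1))
        + edgeDensity A * ((1 - β) * β ^ (k - 1)) := by
  have hS : ∀ e : ι × ι, MeasurableSet {ω | ∃! t : Fin k, B (Fin.castLE hk t) e.1 e.2 ω = 1} :=
    fun e => measurable_pi_lambda (fun ω t => B (Fin.castLE hk t) e.1 e.2 ω)
      (fun t => hmeas _ _ _) (Set.to_countable {x : Fin k → ℕ | ∃! t, x t = 1}).measurableSet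
  let g : ℕ → ℝ := fun a =>
    (if a = 1 then 1 - β else α) * (1 - (if a = 1 then 1 - β else α)) ^ (k - 1)
  calc ∫ ω, replicateStatistic B k hk ω ∂μ
      = 2 / (k * (Fintype.card ι * (Fintype.card ι - 1)))
          * ∑ e ∈ univ.filter (fun e : ι × ι => e.1 < e.2), (k * g (A e.1 e.2)) := by
        simp only [replicateStatistic]
        rw [integral_const_mul, integral_finsetSum _
          fun e _ => (integrable_const 1).indicator (hS e)]
        refine congrArg _ (sum_congr rfl fun e he => ?_)
        rw [integral_indicator_one (hS e), measureReal_existsUnique_castLE_eq_one hmeas hindep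
          (mem_filter.mp he).2 (hp · e (mem_filter.mp he).2)]
    _ = 2 / (Fintype.card ι * (Fintype.card ι - 1 : ℝ))
          * ∑ e ∈ univ.filter (fun e : ι × ι => e.1 < e.2), g (A e.1 e.2) := by
        rw [← mul_sum]
        field_simp
    _ = _ := by
        rw [two_div_mul_sum_filter_lt_eq_edgeDensity hn hsymm hdiag h01]
        simp [g]

end NoisyObservations

theorem replicate_moment_estimators_expectation_general
    {Ω : Type} [MeasurableSpace Ω] (μ : Measure Ω) [IsProbabilityMeasure μ]
    (N : ℕ) (hN : 2 ≤ N)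
    (A : Fin N → Fin N → ℕ)
    (hAsymm : ∀ i j, A i j = A j i)
    (hAdiag : ∀ i, A i i = 0)
    (hA01 : ∀ i j, A i j = 0 ∨ A i j = 1)
    (α β : ℝ) (hα0 : 0 ≤ α) (hβ1 : β ≤ 1)
    -- edge density δ = 2|E|/(N(N−1))
    (δ : ℝ) (hδ : δ = (∑ i, ∑ j, (A i j : ℝ)) / ((N : ℝ) * ((N : ℝ) - 1)))
    -- three noisy observations, each symmetric with zero diagonal and 0/1 entries
    (B : Fin 3 → Fin N → Fin N → Ω → ℕ)
    (hmeas : ∀ t i j, Measurable (B t i j))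
    (h01 : ∀ t i j ω, B t i j ω = 0 ∨ B t i j ω = 1)
    (hfalse : ∀ t, ∀ i j : Fin N, i < j → A i j = 0 →
      μ {ω | B t i j ω = 1} = ENNReal.ofReal α)
    (htrue : ∀ t, ∀ i j : Fin N, i < j → A i j = 1 →
      μ {ω | B t i j ω = 1} = ENNReal.ofReal (1 - β))
    -- all above-diagonal entries of all three observations are jointly independent
    (hindep : iIndepFun
      (fun et : {e : Fin N × Fin N // e.1 < e.2} × Fin 3 =>
        B et.2 et.1.1.1 et.1.1.2) μ) :
    -- E[û₁]
    (∫ ω, (2 / ((N : ℝ) * ((N : ℝ) - 1)))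
        * ∑ e ∈ Finset.univ.filter (fun e : Fin N × Fin N => e.1 < e.2),
            (B 0 e.1 e.2 ω : ℝ) ∂μ
      = (1 - δ) * α + δ * (1 - β)) ∧
    -- E[û₂]
    (∫ ω, (1 / ((N : ℝ) * ((N : ℝ) - 1)))
        * ∑ e ∈ Finset.univ.filter (fun e : Fin N × Fin N => e.1 < e.2),
            |(B 1 e.1 e.2 ω : ℝ) - (B 0 e.1 e.2 ω : ℝ)| ∂μ
      = (1 - δ) * α * (1 - α) + δ * β * (1 - β)) ∧
    -- E[û₃]
    (∫ ω, (2 / (3 * (N : ℝ) * ((N : ℝ) - 1)))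
        * ∑ e ∈ Finset.univ.filter (fun e : Fin N × Fin N => e.1 < e.2),
            (if (B 2 e.1 e.2 ω = 1 ∧ B 1 e.1 e.2 ω ≠ 1 ∧ B 0 e.1 e.2 ω ≠ 1)
              ∨ (B 2 e.1 e.2 ω ≠ 1 ∧ B 1 e.1 e.2 ω = 1 ∧ B 0 e.1 e.2 ω ≠ 1)
              ∨ (B 2 e.1 e.2 ω ≠ 1 ∧ B 1 e.1 e.2 ω ≠ 1 ∧ B 0 e.1 e.2 ω = 1)
             then (1 : ℝ) else 0) ∂μ
      = (1 - δ) * α * (1 - α) ^ 2 + δ * β ^ 2 * (1 - β)) := by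
  have hp : ∀ t, ∀ e : Fin N × Fin N, e.1 < e.2 →
      μ.real {ω | B t e.1 e.2 ω = 1} = if A e.1 e.2 = 1 then 1 - β else α := by
    intro t e he
    rcases hA01 e.1 e.2 with h | h
    · simp [measureReal_def, hfalse t _ _ he h, h, hα0]
    · simp [measureReal_def, htrue t _ _ he h, h, hβ1]
  have hmoment := fun k hk0 hk => integral_replicateStatistic hmeas hindep
    (by simpa using hN) hAsymm hAdiag hA01 hp (k := k) hk0 hk
  obtain rfl : δ = edgeDensity A := by rw [hδ, edgeDensity, Fintype.card_fin]
  refine ⟨?_, ?_, ?_⟩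
  · convert hmoment 1 one_ne_zero (by norm_num) using 1
    · congr 1 with ω
      unfold replicateStatistic
      rw [Nat.cast_one, one_mul, Fintype.card_fin]
      refine congrArg _ (sum_congr rfl fun e _ => ?_)
      rcases h01 0 e.1 e.2 ω with h | h <;> simp [h]
    · ring
  · convert hmoment 2 two_ne_zero (by norm_num) using 1
    · congr 1 with ω
      unfold replicateStatistic
      rw [Fintype.card_fin, Nat.cast_two, div_mul_cancel_left₀ two_ne_zero, one_div]
      refine congrArg _ (sum_congr rfl fun e _ => ?_)
      rcases h01 0 e.1 e.2 ω with h0 | h0 <;> rcases h01 1 e.1 e.2 ω with h1 | h1 <;>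
        simp [ExistsUnique, Fin.exists_fin_two, Fin.forall_fin_two, h0, h1]
    · ring
  · convert hmoment 3 three_ne_zero le_rfl using 1
    · congr 1 with ω
      unfold replicateStatistic
      rw [Fintype.card_fin, Nat.cast_ofNat, mul_assoc]
      refine congrArg _ (sum_congr rfl fun e _ => ?_)
      rcases h01 0 e.1 e.2 ω with h0 | h0 <;> rcases h01 1 e.1 e.2 ω with h1 | h1 <;>
        rcases h01 2 e.1 e.2 ω with h2 | h2 <;>
        simp [ExistsUnique, Fin.exists_fin_succ, Fin.forall_fin_succ, h0, h1, h2]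
    · ring

/-- With three i.i.d. noisy observations `B 0 = Ã`, `B 1 = Ã_*`,
`B 2 = Ã_{**}` of a graph with edge density `δ`, the statistics `û₁, û₂, û₃` have
expectations `(1−δ)α + δ(1−β)`, `(1−δ)α(1−α) + δβ(1−β)` and
`(1−δ)α(1−α)² + δβ²(1−β)` respectively. -/
theorem replicate_moment_estimators_expectation
    {Ω : Type} [MeasurableSpace Ω] (μ : Measure Ω) [IsProbabilityMeasure μ]
    (N : ℕ) (hN : 2 ≤ N)
    (A : Fin N → Fin N → ℕ)
    (hAsymm : ∀ i j, A i j = A j i)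
    (hAdiag : ∀ i, A i i = 0)
    (hA01 : ∀ i j, A i j = 0 ∨ A i j = 1)
    (α β : ℝ) (hα0 : 0 ≤ α) (hα1 : α ≤ 1) (hβ0 : 0 ≤ β) (hβ1 : β ≤ 1)
    -- edge density δ = 2|E|/(N(N−1))
    (δ : ℝ) (hδ : δ = (∑ i, ∑ j, (A i j : ℝ)) / ((N : ℝ) * ((N : ℝ) - 1)))
    -- three noisy observations, each symmetric with zero diagonal and 0/1 entries
    (B : Fin 3 → Fin N → Fin N → Ω → ℕ)
    (hmeas : ∀ t i j, Measurable (B t i j))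
    (hsymm : ∀ t i j ω, B t i j ω = B t j i ω)
    (hdiag : ∀ t i ω, B t i i ω = 0)
    (h01 : ∀ t i j ω, B t i j ω = 0 ∨ B t i j ω = 1)
    (hfalse : ∀ t, ∀ i j : Fin N, i < j → A i j = 0 →
      μ {ω | B t i j ω = 1} = ENNReal.ofReal α)
    (htrue : ∀ t, ∀ i j : Fin N, i < j → A i j = 1 →
      μ {ω | B t i j ω = 1} = ENNReal.ofReal (1 - β))
    -- all above-diagonal entries of all three observations are jointly independent
    (hindep : iIndepFun
      (fun et : {e : Fin N × Fin N // e.1 < e.2} × Fin 3 =>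
        B et.2 et.1.1.1 et.1.1.2) μ) :
    -- E[û₁]
    (∫ ω, (2 / ((N : ℝ) * ((N : ℝ) - 1)))
        * ∑ e ∈ Finset.univ.filter (fun e : Fin N × Fin N => e.1 < e.2),
            (B 0 e.1 e.2 ω : ℝ) ∂μ
      = (1 - δ) * α + δ * (1 - β)) ∧
    -- E[û₂]
    (∫ ω, (1 / ((N : ℝ) * ((N : ℝ) - 1)))
        * ∑ e ∈ Finset.univ.filter (fun e : Fin N × Fin N => e.1 < e.2),
            |(B 1 e.1 e.2 ω : ℝ) - (B 0 e.1 e.2 ω : ℝ)| ∂μ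
      = (1 - δ) * α * (1 - α) + δ * β * (1 - β)) ∧
    -- E[û₃]
    (∫ ω, (2 / (3 * (N : ℝ) * ((N : ℝ) - 1)))
        * ∑ e ∈ Finset.univ.filter (fun e : Fin N × Fin N => e.1 < e.2),
            (if (B 2 e.1 e.2 ω = 1 ∧ B 1 e.1 e.2 ω ≠ 1 ∧ B 0 e.1 e.2 ω ≠ 1)
              ∨ (B 2 e.1 e.2 ω ≠ 1 ∧ B 1 e.1 e.2 ω = 1 ∧ B 0 e.1 e.2 ω ≠ 1)
              ∨ (B 2 e.1 e.2 ω ≠ 1 ∧ B 1 e.1 e.2 ω ≠ 1 ∧ B 0 e.1 e.2 ω = 1)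
             then (1 : ℝ) else 0) ∂μ
      = (1 - δ) * α * (1 - α) ^ 2 + δ * β ^ 2 * (1 - β)) :=
  replicate_moment_estimators_expectation_general μ N hN A hAsymm hAdiag hA01 α β hα0 hβ1 δ hδ B
    hmeas h01 hfalse htrue hindep
end
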